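/- arXiv:1111.6253 — 10 statements merged into one kernel-verified Lean document; each statement's English description precedes it below -/
import Mathlib

section
/- Let m ≥ 2 and let a : Fin m → Tropical (WithTop ℝ). For each k with 1 ≤ k ≤ m−1 define g_k := ∑_{S ⊆ Fin m, |S| = k} ∏_{i ∈ S} a i (the k-th tropical elementary symmetric expression, sum and product taken in the tropical semiring). Then ∏_{i < j} (a i + a j) = g_1 * g_2 * ⋯ * g_{m−1}. -/
open Finset Tropical

private lemma le_app_aux {k m : ℕ} {f : Fin k → Fin m} (hf : StrictMono f) (t : Fin k) :
    (t : ℕ) ≤ (f t : ℕ) := by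
  rcases t with ⟨n, hn⟩
  induction n with
  | zero => exact Nat.zero_le _
  | succ n ih =>
    have hn' : n < k := Nat.lt_of_succ_lt hn
    have h1 : f ⟨n, hn'⟩ < f ⟨n+1, hn⟩ := hf (by simp [Fin.lt_def])
    have h3 : n ≤ (f ⟨n, hn'⟩ : ℕ) := ih hn'
    have h2 : (f ⟨n, hn'⟩ : ℕ) < (f ⟨n+1, hn⟩ : ℕ) := h1
    simpa using Nat.lt_of_le_of_lt h3 h2

private lemma g_eval_aux {m k : ℕ} (hk : k ≤ m) (a : Fin m → Tropical (WithTop ℝ))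
    (ha : Monotone fun i => untrop (a i)) :
    (∑ S ∈ (univ : Finset (Fin m)).powersetCard k, ∏ i ∈ S, a i)
      = ∏ t : Fin k, a (Fin.castLE hk t) := by
  apply untrop_injective
  rw [Finset.untrop_sum']
  apply le_antisymm
  · have hmem : (univ : Finset (Fin k)).map (Fin.castLEEmb hk)
        ∈ (univ : Finset (Fin m)).powersetCard k := by
      simp [mem_powersetCard_univ]
    refine le_trans (Finset.inf_le hmem) ?_
    simp only [Function.comp_apply]
    rw [Finset.prod_map]
    rfl
  · apply Finset.le_inf
    intro S hS
    rw [mem_powersetCard_univ] at hS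
    have hmap : (univ : Finset (Fin k)).map (S.orderEmbOfFin hS).toEmbedding = S := by
      ext i
      simp only [mem_map, mem_univ, true_and, RelEmbedding.coe_toEmbedding]
      constructor
      · rintro ⟨t, rfl⟩; exact S.orderEmbOfFin_mem hS t
      · intro hi
        have : i ∈ Set.range (S.orderEmbOfFin hS) := by
          rw [Finset.range_orderEmbOfFin]; exact hi
        exact this
    simp only [Function.comp_apply]
    rw [← hmap, Finset.prod_map, untrop_prod, untrop_prod]
    apply Finset.sum_le_sum
    intro t _
    apply ha
    rw [Fin.le_def]
    exact le_app_aux (S.orderEmbOfFin hS).strictMono t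

private lemma lhs_mono_aux {m : ℕ} (a : Fin m → Tropical (WithTop ℝ))
    (ha : Monotone fun i => untrop (a i)) :
    (∏ p ∈ Finset.univ.filter (fun p : Fin m × Fin m => p.1 < p.2), (a p.1 + a p.2)) =
      ∏ i : Fin m, a i ^ (m - 1 - (i : ℕ)) := by
  rw [Finset.prod_filter, ← Finset.univ_product_univ, Finset.prod_product]
  apply Finset.prod_congr rfl
  intro i _
  have key : ∀ j : Fin m, (if i < j then a i + a j else 1) = (if i < j then a i else 1) := by
    intro j
    split_ifs with h
    · exact Tropical.add_eq_left (untrop_le_iff.mp (ha h.le))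
    · rfl
  rw [Finset.prod_congr rfl (fun j _ => key j), ← Finset.prod_filter, Finset.prod_const]
  congr 1
  have : Finset.univ.filter (fun j => i < j) = Finset.Ioi i := by
    ext j; simp
  rw [this, Fin.card_Ioi]

private lemma map_castLE_aux {m k : ℕ} (hk : k ≤ m) :
    (Finset.univ : Finset (Fin k)).map (Fin.castLEEmb hk)
      = Finset.univ.filter (fun i : Fin m => (i : ℕ) < k) := by
  ext i
  simp only [mem_map, mem_univ, true_and, mem_filter, Fin.castLEEmb, Function.Embedding.coeFn_mk]
  constructor
  · rintro ⟨t, rfl⟩; exact t.2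
  · intro h; exact ⟨⟨i, h⟩, rfl⟩

private lemma rhs_count_aux {m : ℕ} (a : Fin m → Tropical (WithTop ℝ)) :
    (∏ k ∈ Finset.Icc 1 (m - 1), ∏ i ∈ Finset.univ.filter (fun i : Fin m => (i : ℕ) < k), a i)
      = ∏ i : Fin m, a i ^ (m - 1 - (i : ℕ)) := by
  simp_rw [Finset.prod_filter]
  rw [Finset.prod_comm]
  apply Finset.prod_congr rfl
  intro i _
  rw [← Finset.prod_filter, Finset.prod_const]
  congr 1
  have : (Finset.Icc 1 (m-1)).filter (fun k => (i : ℕ) < k) = Finset.Icc ((i : ℕ)+1) (m-1) := by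
    ext k; simp only [mem_filter, mem_Icc]; omega
  rw [this, Nat.card_Icc]
  omega

/-- Main identity in the monotone case. -/
private lemma main_mono_aux {m : ℕ} (a : Fin m → Tropical (WithTop ℝ))
    (ha : Monotone fun i => untrop (a i)) :
    (∏ p ∈ Finset.univ.filter (fun p : Fin m × Fin m => p.1 < p.2), (a p.1 + a p.2)) =
      ∏ k ∈ Finset.Icc 1 (m - 1),
        ∑ S ∈ (Finset.univ : Finset (Fin m)).powersetCard k, ∏ i ∈ S, a i := by
  rw [lhs_mono_aux a ha, ← rhs_count_aux a]
  apply Finset.prod_congr rfl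
  intro k hk
  have hkm : k ≤ m := le_trans (Finset.mem_Icc.mp hk).2 (Nat.sub_le m 1)
  rw [g_eval_aux hkm a ha, ← map_castLE_aux hkm, Finset.prod_map]
  rfl

private lemma perm_prod_aux {m k : ℕ} (σ : Equiv.Perm (Fin m)) {M : Type*} [CommMonoid M]
    (G : Finset (Fin m) → M) :
    ∏ S ∈ (univ : Finset (Fin m)).powersetCard k, G (S.map σ.toEmbedding)
      = ∏ S ∈ (univ : Finset (Fin m)).powersetCard k, G S := by
  apply Finset.prod_nbij' (i := fun S => S.map σ.toEmbedding)
    (j := fun S => S.map σ.symm.toEmbedding)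
  · intro S hS
    simp only [mem_powersetCard_univ, card_map] at *
    exact hS
  · intro S hS
    simp only [mem_powersetCard_univ, card_map] at *
    exact hS
  · intro S _
    rw [map_map]
    convert Finset.map_refl
    ext i; simp
  · intro S _
    rw [map_map]
    convert Finset.map_refl
    ext i; simp
  · intro S _; rfl

private lemma perm_sum_aux {m k : ℕ} (σ : Equiv.Perm (Fin m)) {M : Type*} [AddCommMonoid M]
    (G : Finset (Fin m) → M) :
    ∑ S ∈ (univ : Finset (Fin m)).powersetCard k, G (S.map σ.toEmbedding)
      = ∑ S ∈ (univ : Finset (Fin m)).powersetCard k, G S := by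
  apply Finset.sum_nbij' (i := fun S => S.map σ.toEmbedding)
    (j := fun S => S.map σ.symm.toEmbedding)
  · intro S hS
    simp only [mem_powersetCard_univ, card_map] at *
    exact hS
  · intro S hS
    simp only [mem_powersetCard_univ, card_map] at *
    exact hS
  · intro S _
    rw [map_map]
    convert Finset.map_refl
    ext i; simp
  · intro S _
    rw [map_map]
    convert Finset.map_refl
    ext i; simp
  · intro S _; rfl

private lemma pair_form_aux {m : ℕ} (a : Fin m → Tropical (WithTop ℝ)) :
    (∏ p ∈ Finset.univ.filter (fun p : Fin m × Fin m => p.1 < p.2), (a p.1 + a p.2))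
      = ∏ S ∈ (Finset.univ : Finset (Fin m)).powersetCard 2, ∑ i ∈ S, a i := by
  apply Finset.prod_bij (i := fun p _ => ({p.1, p.2} : Finset (Fin m)))
  · intro p hp
    simp only [mem_filter, mem_univ, true_and] at hp
    rw [mem_powersetCard_univ]
    exact Finset.card_pair hp.ne
  · rintro ⟨p1, p2⟩ hp ⟨q1, q2⟩ hq h
    simp only [mem_filter, mem_univ, true_and] at hp hq
    have h1 : p1 ∈ ({q1, q2} : Finset (Fin m)) := by rw [← h]; simp
    have h2 : p2 ∈ ({q1, q2} : Finset (Fin m)) := by rw [← h]; simp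
    simp only [mem_insert, mem_singleton] at h1 h2
    rcases h1 with rfl | rfl <;> rcases h2 with rfl | rfl <;>
      first
        | rfl
        | exact absurd hp (lt_irrefl _)
        | exact absurd (hp.trans hq) (lt_irrefl _)
  · intro S hS
    rw [mem_powersetCard_univ] at hS
    obtain ⟨x, y, hxy, rfl⟩ := Finset.card_eq_two.mp hS
    rcases hxy.lt_or_gt with h | h
    · exact ⟨(x, y), by simpa using h, rfl⟩
    · exact ⟨(y, x), by simpa using h, by rw [Finset.pair_comm]⟩
  · intro p hp
    simp only [mem_filter, mem_univ, true_and] at hp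
    rw [Finset.sum_pair hp.ne]

/-- The layered factorization theorem evaluated in the tropical semiring:
for `a : Fin m → Tropical (WithTop ℝ)` with `m ≥ 2`,
`∏_{i<j} (a i + a j) = g 1 * ⋯ * g (m-1)` where
`g k` is the `k`-th tropical elementary symmetric expression. -/
theorem stmt0 (m : ℕ) (hm : 2 ≤ m) (a : Fin m → Tropical (WithTop ℝ)) :
    (∏ p ∈ Finset.univ.filter (fun p : Fin m × Fin m => p.1 < p.2), (a p.1 + a p.2)) =
      ∏ k ∈ Finset.Icc 1 (m - 1),
        ∑ S ∈ (Finset.univ : Finset (Fin m)).powersetCard k, ∏ i ∈ S, a i := by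
  set σ := Tuple.sort (fun i => untrop (a i)) with hσ
  set b : Fin m → Tropical (WithTop ℝ) := fun i => a (σ i) with hb
  have hbmono : Monotone fun i => untrop (b i) := Tuple.monotone_sort (fun i => untrop (a i))
  have hLHS : (∏ p ∈ Finset.univ.filter (fun p : Fin m × Fin m => p.1 < p.2), (a p.1 + a p.2))
      = ∏ p ∈ Finset.univ.filter (fun p : Fin m × Fin m => p.1 < p.2), (b p.1 + b p.2) := by
    rw [pair_form_aux a, pair_form_aux b]
    rw [show (∏ S ∈ (Finset.univ : Finset (Fin m)).powersetCard 2, ∑ i ∈ S, b i)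
        = ∏ S ∈ (Finset.univ : Finset (Fin m)).powersetCard 2, ∑ i ∈ S.map σ.toEmbedding, a i from
      Finset.prod_congr rfl (fun S _ => (Finset.sum_map S σ.toEmbedding a).symm)]
    exact (perm_prod_aux σ (fun T => ∑ i ∈ T, a i)).symm
  rw [hLHS, main_mono_aux b hbmono]
  apply Finset.prod_congr rfl
  intro k _
  rw [show (∑ S ∈ (Finset.univ : Finset (Fin m)).powersetCard k, ∏ i ∈ S, b i)
      = ∑ S ∈ (Finset.univ : Finset (Fin m)).powersetCard k, ∏ i ∈ S.map σ.toEmbedding, a i from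
    Finset.sum_congr rfl (fun S _ => (Finset.prod_map S σ.toEmbedding a).symm)]
  exact perm_sum_aux σ (fun T => ∏ i ∈ T, a i)
end

section
/- Let φ : Rₙ →+* ((Fin n → 𝕋) → 𝕋) be the semiring homomorphism sending a tropical polynomial f to its evaluation function x ↦ MvPolynomial.eval x f (the codomain carrying the pointwise semiring structure), and let 𝓡 be the range of φ, the subsemiring of tropical polynomial functions. Let P be a prime ideal of 𝓡. If f ∈ Rₙ satisfies φ f ∈ P and f.support has at least two elements, then there exist d₁ ≠ d₂ in f.support such that φ (monomial d₁ (f.coeff d₁) + monomial d₂ (f.coeff d₂)) ∈ P; that is, the function of some binomial of f belongs to P. -/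
open MvPolynomial

abbrev 𝕋 : Type := Tropical (WithTop ℝ)

/-- Pointwise (untropicalized) form of the key identity: the sum of pairwise minima over all
ordered distinct pairs from `S` factors through the global infimum. -/
lemma key_untrop {ι : Type*} [DecidableEq ι] (S : Finset ι) (r : ℕ) (hcard : S.card = r + 2)
    (u : ι → WithTop ℝ) :
    ∑ p ∈ S.offDiag, min (u p.1) (u p.2) =
      S.inf u + S.inf (fun i => (2*r+1) • u i + ∑ p ∈ (S.erase i).offDiag, min (u p.1) (u p.2)) := by
  set D : Finset ι → WithTop ℝ := fun s => ∑ p ∈ s.offDiag, min (u p.1) (u p.2) with hD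
  have hS : S.Nonempty := Finset.card_pos.1 (by omega)
  have hsplit : ∀ i ∈ S, D S = D (S.erase i) +
      ∑ j ∈ S.erase i, (min (u i) (u j) + min (u j) (u i)) := by
    intro i hi
    have hnot : i ∉ S.erase i := Finset.notMem_erase i S
    have h1 : Disjoint ((S.erase i).offDiag) ({i} ×ˢ (S.erase i)) := by
      simp only [Finset.disjoint_left, Finset.mem_offDiag, Finset.mem_product,
        Finset.mem_singleton]
      rintro ⟨a, b⟩ ⟨ha, hb, hab⟩ ⟨rfl, -⟩
      exact hnot ha
    have h2 : Disjoint ((S.erase i).offDiag ∪ {i} ×ˢ (S.erase i)) ((S.erase i) ×ˢ {i}) := by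
      simp only [Finset.disjoint_left, Finset.mem_union, Finset.mem_offDiag, Finset.mem_product,
        Finset.mem_singleton]
      rintro ⟨a, b⟩ h ⟨-, rfl⟩
      rcases h with ⟨-, hb, -⟩ | ⟨-, hb⟩ <;> exact hnot hb
    have hod : S.offDiag = (S.erase i).offDiag ∪ {i} ×ˢ (S.erase i) ∪ (S.erase i) ×ˢ {i} := by
      conv_lhs => rw [← Finset.insert_erase hi]
      exact Finset.offDiag_insert hnot
    simp only [hD]
    rw [hod, Finset.sum_union h2, Finset.sum_union h1]
    rw [Finset.sum_product, Finset.sum_singleton, Finset.sum_product]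
    simp only [Finset.sum_singleton]
    rw [add_assoc, ← Finset.sum_add_distrib]
  obtain ⟨i₀, hi₀, hμ⟩ := Finset.exists_mem_eq_inf S hS u
  have hμle : ∀ j ∈ S, S.inf u ≤ u j := fun j hj => Finset.inf_le hj
  have hcarde : ∀ i ∈ S, (S.erase i).card = r + 1 := by
    intro i hi; rw [Finset.card_erase_of_mem hi, hcard]; omega
  have heq : D S = S.inf u + ((2*r+1) • u i₀ + D (S.erase i₀)) := by
    rw [hsplit i₀ hi₀]
    have hterm : ∀ j ∈ S.erase i₀, min (u i₀) (u j) + min (u j) (u i₀) = u i₀ + u i₀ := by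
      intro j hj
      have hj' : u i₀ ≤ u j := hμ ▸ hμle j (Finset.mem_of_mem_erase hj)
      rw [min_eq_left hj', min_comm, min_eq_left hj']
    rw [Finset.sum_congr rfl hterm, Finset.sum_const, hcarde i₀ hi₀, hμ]
    rw [show ∀ x : WithTop ℝ, (r+1) • (x + x) = x + (2*r+1) • x from fun x => by
      rw [smul_add, ← add_nsmul, show (r+1)+(r+1) = (2*r+1)+1 by ring, succ_nsmul' x (2*r+1)]]
    rw [add_comm (D (S.erase i₀)), add_assoc]
  have hineq : ∀ i ∈ S, D S ≤ S.inf u + ((2*r+1) • u i + D (S.erase i)) := by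
    intro i hi
    have he : (S.erase i).Nonempty := Finset.card_pos.1 (by rw [hcarde i hi]; omega)
    obtain ⟨j₁, hj₁, hj₁inf⟩ := Finset.exists_mem_eq_inf (S.erase i) he u
    have hμmin : S.inf u = min (u i) (u j₁) := by
      conv_lhs => rw [← Finset.insert_erase hi]
      rw [Finset.inf_insert, ← hj₁inf]
    rw [hsplit i hi]
    have hsum : ∑ j ∈ S.erase i, (min (u i) (u j) + min (u j) (u i)) ≤
        S.inf u + (2*r+1) • u i := by
      rw [← Finset.add_sum_erase _ _ hj₁]
      have hb1 : min (u i) (u j₁) + min (u j₁) (u i) = S.inf u + S.inf u := by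
        rw [min_comm (u j₁), hμmin]
      have hb2 : ∑ j ∈ (S.erase i).erase j₁, (min (u i) (u j) + min (u j) (u i)) ≤
          r • (u i + u i) := by
        have := Finset.sum_le_sum (s := (S.erase i).erase j₁)
          (g := fun _ => u i + u i)
          (fun j (hj : j ∈ (S.erase i).erase j₁) =>
            add_le_add (min_le_left (u i) (u j)) (min_le_right (u j) (u i)))
        rwa [Finset.sum_const, Finset.card_erase_of_mem hj₁, hcarde i hi,
          Nat.add_sub_cancel] at this
      rw [hb1]
      calc S.inf u + S.inf u + ∑ j ∈ (S.erase i).erase j₁, (min (u i) (u j) + min (u j) (u i))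
          ≤ S.inf u + S.inf u + r • (u i + u i) := add_le_add_right hb2 _
        _ = S.inf u + (S.inf u + (2*r) • u i) := by
            rw [smul_add, ← add_nsmul, ← two_mul, add_assoc]
        _ ≤ S.inf u + (u i + (2*r) • u i) :=
            add_le_add_right (add_le_add_left (hμle i hi) _) _
        _ = S.inf u + (2*r+1) • u i := by rw [← succ_nsmul' (u i) (2*r)]
    calc D (S.erase i) + ∑ j ∈ S.erase i, (min (u i) (u j) + min (u j) (u i))
        ≤ D (S.erase i) + (S.inf u + (2*r+1) • u i) := add_le_add_right hsum _
      _ = S.inf u + ((2*r+1) • u i + D (S.erase i)) := by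
          rw [add_comm (D (S.erase i)), add_assoc]
  obtain ⟨i₁, hi₁, hT⟩ := Finset.exists_mem_eq_inf S hS
    (fun i => (2*r+1) • u i + D (S.erase i))
  apply le_antisymm
  · rw [hT]; exact hineq i₁ hi₁
  · calc S.inf u + S.inf (fun i => (2*r+1) • u i + D (S.erase i))
        ≤ S.inf u + ((2*r+1) • u i₀ + D (S.erase i₀)) := add_le_add_right (Finset.inf_le hi₀) _
      _ = D S := heq.symm

/-- Tropical form of the key identity: the product of all binomials `v i + v j`, over ordered
pairs of distinct indices in `S`, equals `(∑ i, v i)` times another tropical expression. -/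
lemma trop_key {ι : Type*} [DecidableEq ι] (S : Finset ι) (r : ℕ) (hcard : S.card = r + 2)
    (v : ι → 𝕋) :
    ∏ p ∈ S.offDiag, (v p.1 + v p.2) =
      (∑ i ∈ S, v i) *
        ∑ i ∈ S, v i ^ (2*r+1) * ∏ p ∈ (S.erase i).offDiag, (v p.1 + v p.2) := by
  apply Tropical.untrop_injective
  simp only [Tropical.untrop_mul, untrop_prod, Finset.untrop_sum', Function.comp_def,
    Tropical.untrop_add, Tropical.untrop_pow]
  exact key_untrop S r hcard (fun i => Tropical.untrop (v i))

/-- The evaluation homomorphism sending a tropical polynomial to its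
evaluation function, the codomain carrying the pointwise semiring structure. -/
noncomputable def evalHom (n : ℕ) : MvPolynomial (Fin n) 𝕋 →+* ((Fin n → 𝕋) → 𝕋) :=
  Pi.ringHom (fun x => MvPolynomial.eval x)

/-- If `P` is a prime ideal of the semiring of tropical polynomial functions and the
function of `f` lies in `P`, where `f` has at least two monomials, then the function of
some binomial of `f` lies in `P`. -/
theorem stmt1 {n : ℕ} (P : Ideal (evalHom n).rangeS) (hP : P.IsPrime)
    (f : MvPolynomial (Fin n) 𝕋) (hf : 2 ≤ f.support.card)
    (hfP : (⟨evalHom n f, RingHom.mem_rangeS.2 ⟨f, rfl⟩⟩ : (evalHom n).rangeS) ∈ P) :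
    ∃ d₁ ∈ f.support, ∃ d₂ ∈ f.support, d₁ ≠ d₂ ∧
      (⟨evalHom n (MvPolynomial.monomial d₁ (f.coeff d₁) +
          MvPolynomial.monomial d₂ (f.coeff d₂)),
        RingHom.mem_rangeS.2 ⟨_, rfl⟩⟩ : (evalHom n).rangeS) ∈ P := by
  classical
  obtain ⟨r, hr⟩ : ∃ r, f.support.card = r + 2 := ⟨f.support.card - 2, by omega⟩
  set M : (Fin n →₀ ℕ) → MvPolynomial (Fin n) 𝕋 := fun d => monomial d (f.coeff d) with hM
  set w : MvPolynomial (Fin n) 𝕋 :=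
    ∑ i ∈ f.support, M i ^ (2*r+1) * ∏ p ∈ (f.support.erase i).offDiag, (M p.1 + M p.2)
    with hw
  have hkey : evalHom n (∏ p ∈ f.support.offDiag, (M p.1 + M p.2)) =
      evalHom n f * evalHom n w := by
    funext x
    show eval x (∏ p ∈ f.support.offDiag, (M p.1 + M p.2)) = eval x f * eval x w
    have hfx : eval x f = ∑ d ∈ f.support, eval x (M d) := by
      conv_lhs => rw [f.as_sum]
      rw [map_sum]
    rw [map_prod, hfx, hw, map_sum]
    simp only [map_mul, map_pow, map_prod, map_add]
    exact trop_key f.support r hr (fun d => eval x (M d))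
  have hmem : ∀ g : MvPolynomial (Fin n) 𝕋, evalHom n g ∈ (evalHom n).rangeS :=
    fun g => RingHom.mem_rangeS.2 ⟨g, rfl⟩
  set Φ : MvPolynomial (Fin n) 𝕋 → (evalHom n).rangeS := fun g => ⟨evalHom n g, hmem g⟩ with hΦ
  have hΦprod : ∀ (s : Finset ((Fin n →₀ ℕ) × (Fin n →₀ ℕ)))
      (g : ((Fin n →₀ ℕ) × (Fin n →₀ ℕ)) → MvPolynomial (Fin n) 𝕋),
      Φ (∏ p ∈ s, g p) = ∏ p ∈ s, Φ (g p) := by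
    intro s g
    apply Subtype.ext
    rw [SubmonoidClass.coe_finset_prod]
    show evalHom n (∏ p ∈ s, g p) = ∏ p ∈ s, evalHom n (g p)
    exact map_prod (evalHom n) _ _
  have hprodP : (∏ p ∈ f.support.offDiag, Φ (M p.1 + M p.2)) ∈ P := by
    rw [← hΦprod]
    have heq : Φ (∏ p ∈ f.support.offDiag, (M p.1 + M p.2)) =
        (⟨evalHom n f, hmem f⟩ : (evalHom n).rangeS) * Φ w := Subtype.ext hkey
    rw [heq]
    exact Ideal.mul_mem_right _ _ hfP
  haveI := hP
  rw [Ideal.IsPrime.prod_mem_iff] at hprodP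
  obtain ⟨p, hpmem, hpP⟩ := hprodP
  obtain ⟨h1, h2, h3⟩ := Finset.mem_offDiag.1 hpmem
  exact ⟨p.1, h1, p.2, h2, h3, hpP⟩
end

section
/- Fix a : Fin n → ℝ and let P_a := {f ∈ Rₙ | f = 0 ∨ a is a corner root of f}. Then P_a is a prime ideal of Rₙ: it contains 0, is closed under addition and under multiplication by arbitrary elements of Rₙ, is proper (1 ∉ P_a), and whenever f * g ∈ P_a one has f ∈ P_a or g ∈ P_a. Moreover its corner locus is exactly {a}: a point b : Fin n → ℝ is a corner root of every nonzero element of P_a if and only if b = a. -/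
open MvPolynomial

/-- The 𝕋-point determined by a real point. -/
noncomputable def tpt {n : ℕ} (a : Fin n → ℝ) : Fin n → 𝕋 :=
  fun i => Tropical.trop (a i : WithTop ℝ)

/-- The value at `a` of the `d`-monomial of `f`. -/
noncomputable def mval {n : ℕ} (f : MvPolynomial (Fin n) 𝕋) (d : Fin n →₀ ℕ)
    (a : Fin n → ℝ) : 𝕋 :=
  f.coeff d * ∏ i, (tpt a i) ^ d i

/-- `a` is a corner root of `f` if at least two monomials of `f` attain the value of `f`
at `a`. -/
def IsCornerRoot {n : ℕ} (a : Fin n → ℝ) (f : MvPolynomial (Fin n) 𝕋) : Prop :=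
  ∃ d₁ ∈ f.support, ∃ d₂ ∈ f.support, d₁ ≠ d₂ ∧
    mval f d₁ a = MvPolynomial.eval (tpt a) f ∧ mval f d₂ a = MvPolynomial.eval (tpt a) f

/-- The corner prime ideal at a point. -/
def cornerIdealAt {n : ℕ} (a : Fin n → ℝ) : Set (MvPolynomial (Fin n) 𝕋) :=
  {f | f = 0 ∨ IsCornerRoot a f}

namespace CornerAux

lemma eq_zero_iff {x : 𝕋} : x = 0 ↔ Tropical.untrop x = ⊤ :=
  ⟨fun h => by rw [h]; rfl, fun h => Tropical.untrop_injective (by rw [h]; rfl)⟩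

lemma tpt_ne_zero {n : ℕ} (a : Fin n → ℝ) (i : Fin n) : tpt a i ≠ 0 := by
  intro h
  rw [eq_zero_iff] at h
  exact WithTop.coe_ne_top h

lemma pi_ne_zero {n : ℕ} (a : Fin n → ℝ) (d : Fin n →₀ ℕ) :
    (∏ i, (tpt a i) ^ d i) ≠ 0 := by
  rw [Finset.prod_ne_zero_iff]
  exact fun i _ => pow_ne_zero _ (tpt_ne_zero a i)

lemma mval_eq_zero {n : ℕ} {f : MvPolynomial (Fin n) 𝕋} {d : Fin n →₀ ℕ} {a : Fin n → ℝ} :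
    mval f d a = 0 ↔ f.coeff d = 0 := by
  rw [mval, mul_eq_zero]
  exact ⟨fun h => h.resolve_right (pi_ne_zero a d), Or.inl⟩

lemma eval_eq_sum {n : ℕ} (f : MvPolynomial (Fin n) 𝕋) (a : Fin n → ℝ) :
    MvPolynomial.eval (tpt a) f = ∑ d ∈ f.support, mval f d a := by
  rw [MvPolynomial.eval_eq']; rfl

lemma sum_le_term {ι : Type*} {s : Finset ι} (h : ι → 𝕋) {x : ι} (hx : x ∈ s) :
    (∑ i ∈ s, h i) ≤ h x := by
  rw [← Tropical.untrop_le_iff, Finset.untrop_sum']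
  exact Finset.inf_le hx

lemma sum_attained {ι : Type*} {s : Finset ι} (h : ι → 𝕋) (hs : s.Nonempty) :
    ∃ x ∈ s, (∑ i ∈ s, h i) = h x := by
  obtain ⟨x, hx, he⟩ := Finset.exists_mem_eq_inf s hs (Tropical.untrop ∘ h)
  exact ⟨x, hx, Tropical.untrop_injective (by rw [Finset.untrop_sum']; exact he)⟩

lemma eval_le_mval {n : ℕ} (f : MvPolynomial (Fin n) 𝕋) (d : Fin n →₀ ℕ) (a : Fin n → ℝ) :
    MvPolynomial.eval (tpt a) f ≤ mval f d a := by
  by_cases hd : d ∈ f.support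
  · rw [eval_eq_sum]
    exact sum_le_term _ hd
  · rw [MvPolynomial.mem_support_iff, not_not] at hd
    rw [mval_eq_zero.mpr hd]
    exact Tropical.le_zero _

lemma exists_min {n : ℕ} {f : MvPolynomial (Fin n) 𝕋} (hf : f ≠ 0) (a : Fin n → ℝ) :
    ∃ d ∈ f.support, mval f d a = MvPolynomial.eval (tpt a) f := by
  obtain ⟨d, hd, he⟩ := sum_attained (fun d => mval f d a)
    (MvPolynomial.support_nonempty.mpr hf)
  exact ⟨d, hd, by rw [eval_eq_sum, he]⟩

lemma eval_ne_zero {n : ℕ} {f : MvPolynomial (Fin n) 𝕋} (hf : f ≠ 0) (a : Fin n → ℝ) :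
    MvPolynomial.eval (tpt a) f ≠ 0 := by
  obtain ⟨d, hd, he⟩ := exists_min hf a
  rw [← he]
  intro h
  exact (MvPolynomial.mem_support_iff.mp hd) (mval_eq_zero.mp h)

lemma mem_support_of_min {n : ℕ} {f : MvPolynomial (Fin n) 𝕋} (hf : f ≠ 0)
    {a : Fin n → ℝ} {d : Fin n →₀ ℕ} (h : mval f d a = MvPolynomial.eval (tpt a) f) :
    d ∈ f.support := by
  rw [MvPolynomial.mem_support_iff]
  intro h0
  exact eval_ne_zero hf a (h ▸ mval_eq_zero.mpr h0)

lemma unique_min {n : ℕ} {f : MvPolynomial (Fin n) 𝕋} (hf : f ≠ 0) {a : Fin n → ℝ}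
    (hnc : ¬ IsCornerRoot a f) {d d' : Fin n →₀ ℕ}
    (h : mval f d a = MvPolynomial.eval (tpt a) f)
    (h' : mval f d' a = MvPolynomial.eval (tpt a) f) : d = d' := by
  by_contra hne
  exact hnc ⟨d, mem_support_of_min hf h, d', mem_support_of_min hf h', hne, h, h'⟩

lemma mval_add {n : ℕ} (f g : MvPolynomial (Fin n) 𝕋) (d : Fin n →₀ ℕ) (a : Fin n → ℝ) :
    mval (f + g) d a = mval f d a + mval g d a := by
  simp [mval, MvPolynomial.coeff_add, add_mul]

lemma mval_mul {n : ℕ} (f g : MvPolynomial (Fin n) 𝕋) (d : Fin n →₀ ℕ) (a : Fin n → ℝ) :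
    mval (f * g) d a = ∑ x ∈ Finset.HasAntidiagonal.antidiagonal d, mval f x.1 a * mval g x.2 a := by
  classical
  simp only [mval, MvPolynomial.coeff_mul, Finset.sum_mul]
  apply Finset.sum_congr rfl
  intro x hx
  have hxd : x.1 + x.2 = d := Finset.HasAntidiagonal.mem_antidiagonal.mp hx
  have hp : ∏ i, tpt a i ^ d i = (∏ i, tpt a i ^ x.1 i) * ∏ i, tpt a i ^ x.2 i := by
    rw [← Finset.prod_mul_distrib]
    apply Finset.prod_congr rfl
    intro i _
    rw [← pow_add, ← hxd, Finsupp.add_apply]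
  rw [hp]
  ring

lemma eq_of_mul_eq {x x' y y' : 𝕋} (hx : x' ≤ x) (hy : y' ≤ y) (h : x * y = x' * y')
    (hx0 : x' ≠ 0) (hy0 : y' ≠ 0) : x = x' ∧ y = y' := by
  rw [← Tropical.untrop_le_iff] at hx hy
  have h' : Tropical.untrop x + Tropical.untrop y
      = Tropical.untrop x' + Tropical.untrop y' := by
    rw [← Tropical.untrop_mul, ← Tropical.untrop_mul, h]
  have hx0' : Tropical.untrop x' ≠ ⊤ := fun h => hx0 (eq_zero_iff.mpr h)
  have hy0' : Tropical.untrop y' ≠ ⊤ := fun h => hy0 (eq_zero_iff.mpr h)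
  constructor
  · apply Tropical.untrop_injective
    by_contra hne
    have : Tropical.untrop x' < Tropical.untrop x := lt_of_le_of_ne hx (fun h => hne h.symm)
    exact absurd h' (ne_of_gt (WithTop.add_lt_add_of_lt_of_le hy0' this hy))
  · apply Tropical.untrop_injective
    by_contra hne
    have : Tropical.untrop y' < Tropical.untrop y := lt_of_le_of_ne hy (fun h => hne h.symm)
    exact absurd h' (ne_of_gt (WithTop.add_lt_add_of_le_of_lt hx0' hx this))

lemma add_corner {n : ℕ} {a : Fin n → ℝ} {f g : MvPolynomial (Fin n) 𝕋}
    (hf : IsCornerRoot a f)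
    (hle : MvPolynomial.eval (tpt a) f ≤ MvPolynomial.eval (tpt a) g) :
    IsCornerRoot a (f + g) := by
  obtain ⟨d₁, h₁s, d₂, h₂s, hne, h₁, h₂⟩ := hf
  have hf0 : f ≠ 0 := fun h => by simp [h] at h₁s
  have hevalfg : MvPolynomial.eval (tpt a) (f + g) = MvPolynomial.eval (tpt a) f := by
    rw [map_add, Tropical.add_eq_left hle]
  have key : ∀ d : Fin n →₀ ℕ, mval f d a = MvPolynomial.eval (tpt a) f →
      mval (f + g) d a = MvPolynomial.eval (tpt a) (f + g) ∧ d ∈ (f + g).support := by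
    intro d hd
    have hv : mval (f + g) d a = mval f d a := by
      rw [mval_add]
      exact Tropical.add_eq_left (hd ▸ hle.trans (eval_le_mval g d a))
    have hv' : mval (f + g) d a = MvPolynomial.eval (tpt a) (f + g) := by
      rw [hv, hd, hevalfg]
    refine ⟨hv', ?_⟩
    rw [MvPolynomial.mem_support_iff]
    intro h0
    exact eval_ne_zero hf0 a (by rw [← hevalfg, ← hv', mval_eq_zero.mpr h0])
  obtain ⟨hv₁, hm₁⟩ := key d₁ h₁
  obtain ⟨hv₂, hm₂⟩ := key d₂ h₂
  exact ⟨d₁, hm₁, d₂, hm₂, hne, hv₁, hv₂⟩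

end CornerAux

open CornerAux in
/-- `P_a` is a prime ideal of the tropical polynomial semiring whose corner locus is
exactly `{a}`. -/
theorem stmt2 {n : ℕ} (a : Fin n → ℝ) :
    (0 : MvPolynomial (Fin n) 𝕋) ∈ cornerIdealAt a ∧
    (∀ f g, f ∈ cornerIdealAt a → g ∈ cornerIdealAt a → f + g ∈ cornerIdealAt a) ∧
    (∀ r f, f ∈ cornerIdealAt a → r * f ∈ cornerIdealAt a) ∧
    (1 : MvPolynomial (Fin n) 𝕋) ∉ cornerIdealAt a ∧
    (∀ f g, f * g ∈ cornerIdealAt a → f ∈ cornerIdealAt a ∨ g ∈ cornerIdealAt a) ∧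
    (∀ b : Fin n → ℝ,
      (∀ f ∈ cornerIdealAt a, f ≠ 0 → IsCornerRoot b f) ↔ b = a) := by
  classical
  refine ⟨Or.inl rfl, ?_, ?_, ?_, ?_, ?_⟩
  · -- addition
    rintro f g (rfl | hf) hg
    · simpa using hg
    rcases hg with rfl | hg
    · exact Or.inr (by simpa using hf)
    rcases le_total (MvPolynomial.eval (tpt a) f) (MvPolynomial.eval (tpt a) g) with h | h
    · exact Or.inr (add_corner hf h)
    · exact Or.inr (add_comm g f ▸ add_corner hg h)
  · -- multiplication by arbitrary element
    rintro r f (rfl | hf)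
    · exact Or.inl (mul_zero r)
    by_cases hr0 : r = 0
    · exact Or.inl (by rw [hr0, zero_mul])
    obtain ⟨d₁, h₁s, d₂, h₂s, hne, h₁, h₂⟩ := hf
    have hf0 : f ≠ 0 := fun h => by simp [h] at h₁s
    obtain ⟨e, hes, he⟩ := exists_min hr0 a
    have hev : MvPolynomial.eval (tpt a) (r * f) ≠ 0 := by
      rw [map_mul]
      exact mul_ne_zero (eval_ne_zero hr0 a) (eval_ne_zero hf0 a)
    have key : ∀ d : Fin n →₀ ℕ, mval f d a = MvPolynomial.eval (tpt a) f →
        mval (r * f) (e + d) a = MvPolynomial.eval (tpt a) (r * f) := by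
      intro d hd
      refine le_antisymm ?_ (eval_le_mval _ _ _)
      rw [mval_mul]
      have hmem : ((e, d) : (Fin n →₀ ℕ) × (Fin n →₀ ℕ)) ∈ Finset.HasAntidiagonal.antidiagonal (e + d) :=
        Finset.HasAntidiagonal.mem_antidiagonal.mpr rfl
      calc (∑ x ∈ Finset.HasAntidiagonal.antidiagonal (e + d), mval r x.1 a * mval f x.2 a)
          ≤ mval r e a * mval f d a := sum_le_term _ hmem
        _ = MvPolynomial.eval (tpt a) (r * f) := by rw [he, hd, map_mul]
    have hmem : ∀ d : Fin n →₀ ℕ, mval (r * f) d a = MvPolynomial.eval (tpt a) (r * f) →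
        d ∈ (r * f).support := by
      intro d hd
      rw [MvPolynomial.mem_support_iff]
      exact fun h0 => hev (hd ▸ mval_eq_zero.mpr h0)
    refine Or.inr ⟨e + d₁, hmem _ (key d₁ h₁), e + d₂, hmem _ (key d₂ h₂), ?_,
      key d₁ h₁, key d₂ h₂⟩
    exact fun h => hne (add_left_cancel h)
  · -- 1 ∉ P_a
    rintro (h0 | hc)
    · have h1 : (1 : 𝕋) = 0 := by
        have := congrArg (MvPolynomial.coeff 0) h0
        rwa [MvPolynomial.coeff_one, if_pos rfl, MvPolynomial.coeff_zero] at this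
      have := congrArg Tropical.untrop h1
      rw [Tropical.untrop_one, Tropical.untrop_zero] at this
      exact WithTop.zero_ne_top this
    · obtain ⟨d₁, h₁s, d₂, h₂s, hne, -, -⟩ := hc
      have hsupp : ∀ d : Fin n →₀ ℕ,
          d ∈ (1 : MvPolynomial (Fin n) 𝕋).support → d = 0 := by
        intro d hd
        rw [MvPolynomial.mem_support_iff, MvPolynomial.coeff_one] at hd
        by_contra h
        exact hd (by rw [if_neg (fun h' => h h'.symm)])
      exact hne ((hsupp d₁ h₁s).trans (hsupp d₂ h₂s).symm)
  · -- primality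
    rintro f g (hfg0 | hfg)
    · by_cases hf0 : f = 0
      · exact Or.inl (Or.inl hf0)
      by_cases hg0 : g = 0
      · exact Or.inr (Or.inl hg0)
      exfalso
      have : MvPolynomial.eval (tpt a) (f * g) ≠ 0 := by
        rw [map_mul]
        exact mul_ne_zero (eval_ne_zero hf0 a) (eval_ne_zero hg0 a)
      exact this (by rw [hfg0, map_zero])
    by_cases hf0 : f = 0
    · exact Or.inl (Or.inl hf0)
    by_cases hg0 : g = 0
    · exact Or.inr (Or.inl hg0)
    by_cases hfc : IsCornerRoot a f
    · exact Or.inl (Or.inr hfc)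
    by_cases hgc : IsCornerRoot a g
    · exact Or.inr (Or.inr hgc)
    exfalso
    obtain ⟨ef, hefs, hef⟩ := exists_min hf0 a
    obtain ⟨eg, hegs, heg⟩ := exists_min hg0 a
    obtain ⟨d₁, h₁s, d₂, h₂s, hne, h₁, h₂⟩ := hfg
    have claim : ∀ d : Fin n →₀ ℕ,
        mval (f * g) d a = MvPolynomial.eval (tpt a) (f * g) → d = ef + eg := by
      intro d hd
      rw [mval_mul] at hd
      have hnonempty : (Finset.HasAntidiagonal.antidiagonal d).Nonempty :=
        ⟨(0, d), Finset.HasAntidiagonal.mem_antidiagonal.mpr (zero_add d)⟩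
      obtain ⟨x, hx, hterm⟩ :=
        sum_attained (fun x : (Fin n →₀ ℕ) × (Fin n →₀ ℕ) => mval f x.1 a * mval g x.2 a)
          hnonempty
      have hxe : mval f x.1 a * mval g x.2 a
          = MvPolynomial.eval (tpt a) f * MvPolynomial.eval (tpt a) g := by
        rw [← hterm, hd, map_mul]
      obtain ⟨hx1, hx2⟩ := eq_of_mul_eq (eval_le_mval f x.1 a) (eval_le_mval g x.2 a)
        hxe (eval_ne_zero hf0 a) (eval_ne_zero hg0 a)
      have e1 : x.1 = ef := unique_min hf0 hfc hx1 hef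
      have e2 : x.2 = eg := unique_min hg0 hgc hx2 heg
      rw [← Finset.HasAntidiagonal.mem_antidiagonal.mp hx, e1, e2]
    exact hne ((claim d₁ h₁).trans (claim d₂ h₂).symm)
  · -- corner locus
    intro b
    constructor
    · intro h
      funext i
      by_contra hnei
      set c : 𝕋 := Tropical.trop ((a i : WithTop ℝ)) with hc
      have hc0 : c ≠ 0 := fun h => WithTop.coe_ne_top (eq_zero_iff.mp h)
      set f : MvPolynomial (Fin n) 𝕋 := X i + C c with hfdef
      have hsne : (Finsupp.single i 1 : Fin n →₀ ℕ) ≠ 0 :=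
        fun h => one_ne_zero (Finsupp.single_eq_zero.mp h)
      have hco1 : f.coeff (Finsupp.single i 1) = 1 := by
        rw [hfdef, MvPolynomial.coeff_add, MvPolynomial.coeff_X,
          MvPolynomial.coeff_C, if_neg (show ¬ (0 : Fin n →₀ ℕ) = Finsupp.single i 1 from fun h => hsne h.symm), add_zero, if_pos rfl]
      have hco0 : f.coeff 0 = c := by
        rw [hfdef, MvPolynomial.coeff_add, MvPolynomial.coeff_X',
          if_neg hsne, MvPolynomial.coeff_C, if_pos rfl, zero_add]
      have hsupp : ∀ d : Fin n →₀ ℕ, d ∈ f.support →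
          d = Finsupp.single i 1 ∨ d = 0 := by
        intro d hd
        rw [MvPolynomial.mem_support_iff] at hd
        by_contra hcon
        push_neg at hcon
        apply hd
        rw [hfdef, MvPolynomial.coeff_add, MvPolynomial.coeff_X',
          if_neg (fun h => hcon.1 h.symm), MvPolynomial.coeff_C,
          if_neg (fun h => hcon.2 h.symm), add_zero]
      have hprod : ∀ u : Fin n → ℝ,
          (∏ j, tpt u j ^ (Finsupp.single i 1 : Fin n →₀ ℕ) j) = tpt u i := by
        intro u
        rw [Finset.prod_eq_single i]
        · rw [Finsupp.single_eq_same, pow_one]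
        · intro j _ hj
          rw [Finsupp.single_eq_of_ne' (Ne.symm hj), pow_zero]
        · exact fun h => absurd (Finset.mem_univ i) h
      have hms : ∀ u : Fin n → ℝ, mval f (Finsupp.single i 1) u = tpt u i := by
        intro u
        rw [mval, hco1, hprod, one_mul]
      have hm0 : ∀ u : Fin n → ℝ, mval f 0 u = c := by
        intro u
        rw [mval, hco0]
        simp
      have hf0 : f ≠ 0 := by
        intro h
        have := hco1
        rw [h, MvPolynomial.coeff_zero] at this
        have := congrArg Tropical.untrop this
        rw [Tropical.untrop_zero, Tropical.untrop_one] at this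
        exact WithTop.zero_ne_top this.symm
      have hmem1 : Finsupp.single i 1 ∈ f.support := by
        rw [MvPolynomial.mem_support_iff, hco1]
        intro h
        have := congrArg Tropical.untrop h
        rw [Tropical.untrop_one, Tropical.untrop_zero] at this
        exact WithTop.zero_ne_top this
      have hmem0 : (0 : Fin n →₀ ℕ) ∈ f.support := by
        rw [MvPolynomial.mem_support_iff, hco0]; exact hc0
      have hevala : MvPolynomial.eval (tpt a) f = c := by
        rw [hfdef, map_add, MvPolynomial.eval_X, MvPolynomial.eval_C]
        have : tpt a i = c := rfl
        rw [this, Tropical.add_self]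
      have hfP : f ∈ cornerIdealAt a := by
        refine Or.inr ⟨Finsupp.single i 1, hmem1, 0, hmem0, hsne, ?_, ?_⟩
        · rw [hms, hevala]; rfl
        · rw [hm0, hevala]
      obtain ⟨d₁, h₁s, d₂, h₂s, hdne, hv₁, hv₂⟩ := h f hfP hf0
      have hvals : tpt b i = c := by
        rcases hsupp d₁ h₁s with e₁ | e₁ <;> rcases hsupp d₂ h₂s with e₂ | e₂
        · exact absurd (e₁.trans e₂.symm) hdne
        · have := hv₁.trans hv₂.symm
          rwa [e₁, e₂, hms, hm0] at this
        · have := hv₂.trans hv₁.symm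
          rwa [e₂, e₁, hms, hm0] at this
        · exact absurd (e₁.trans e₂.symm) hdne
      exact hnei (WithTop.coe_injective (Tropical.trop_injective hvals))
    · rintro rfl f hf hf0
      exact (hf.resolve_left hf0)
end

section
/- Let a : Fin n → ℝ and let f, g ∈ Rₙ be nonzero. If there is exactly one d ∈ f.support with mval f d a = MvPolynomial.eval ā f, and exactly one e ∈ g.support with mval g e a = MvPolynomial.eval ā g, then there is exactly one exponent d' ∈ (f * g).support with mval (f * g) d' a = MvPolynomial.eval ā (f * g). -/
open MvPolynomial

open Tropical

noncomputable def tmon {n : ℕ} (a : Fin n → ℝ) (d : Fin n →₀ ℕ) : 𝕋 :=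
  ∏ i, (tpt a i) ^ d i

lemma mval_def {n : ℕ} (f : MvPolynomial (Fin n) 𝕋) (d : Fin n →₀ ℕ) (a : Fin n → ℝ) :
    mval f d a = f.coeff d * tmon a d := rfl

lemma tpt_ne_zero {n : ℕ} (a : Fin n → ℝ) (i : Fin n) : tpt a i ≠ 0 := by
  simp only [tpt]
  intro h
  exact WithTop.coe_ne_top (trop_injective h)

lemma tmon_ne_zero {n : ℕ} (a : Fin n → ℝ) (d : Fin n →₀ ℕ) : tmon a d ≠ 0 := by
  rw [tmon, Finset.prod_ne_zero_iff]
  exact fun i _ => pow_ne_zero _ (tpt_ne_zero a i)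

lemma tmon_add {n : ℕ} (a : Fin n → ℝ) (d e : Fin n →₀ ℕ) :
    tmon a (d + e) = tmon a d * tmon a e := by
  rw [tmon, tmon, tmon, ← Finset.prod_mul_distrib]
  exact Finset.prod_congr rfl fun i _ => by rw [Finsupp.add_apply, pow_add]

lemma eval_eq_sum' {n : ℕ} (a : Fin n → ℝ) (f : MvPolynomial (Fin n) 𝕋) :
    MvPolynomial.eval (tpt a) f = ∑ d ∈ f.support, mval f d a :=
  eval_eq' (tpt a) f

lemma eval_le_mval {n : ℕ} (a : Fin n → ℝ) (f : MvPolynomial (Fin n) 𝕋)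
    (d : Fin n →₀ ℕ) : MvPolynomial.eval (tpt a) f ≤ mval f d a := by
  by_cases hd : d ∈ f.support
  · rw [← untrop_le_iff, eval_eq_sum', Finset.untrop_sum']
    exact Finset.inf_le hd
  · rw [mval, notMem_support_iff.mp hd, zero_mul, ← untrop_le_iff, untrop_zero]
    exact le_top

lemma mval_ne_zero {n : ℕ} {a : Fin n → ℝ} {f : MvPolynomial (Fin n) 𝕋}
    {d : Fin n →₀ ℕ} (hd : d ∈ f.support) : mval f d a ≠ 0 :=
  mul_ne_zero (mem_support_iff.mp hd) (tmon_ne_zero a d)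

lemma untrop_ne_top {x : 𝕋} (h : x ≠ 0) : untrop x ≠ ⊤ :=
  fun ht => h (untrop_injective (by rw [ht, untrop_zero]))

/-- If `f` and `g` each have exactly one monomial attaining their value at `a`, then so
does `f * g`. -/
theorem stmt3 {n : ℕ} (a : Fin n → ℝ) (f g : MvPolynomial (Fin n) 𝕋)
    (hf0 : f ≠ 0) (hg0 : g ≠ 0)
    (hf : ∃! d, d ∈ f.support ∧ mval f d a = MvPolynomial.eval (tpt a) f)
    (hg : ∃! e, e ∈ g.support ∧ mval g e a = MvPolynomial.eval (tpt a) g) :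
    ∃! d', d' ∈ (f * g).support ∧
      mval (f * g) d' a = MvPolynomial.eval (tpt a) (f * g) := by
  obtain ⟨d₀, ⟨hd₀s, hd₀e⟩, hd₀u⟩ := hf
  obtain ⟨e₀, ⟨he₀s, he₀e⟩, he₀u⟩ := hg
  have hEf : MvPolynomial.eval (tpt a) f ≠ 0 := hd₀e ▸ mval_ne_zero hd₀s
  have hEg : MvPolynomial.eval (tpt a) g ≠ 0 := he₀e ▸ mval_ne_zero he₀s
  have hfl : ∀ d, d ≠ d₀ → MvPolynomial.eval (tpt a) f < mval f d a := by
    intro d hd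
    refine lt_of_le_of_ne (eval_le_mval a f d) fun h => ?_
    by_cases hs : d ∈ f.support
    · exact hd (hd₀u d ⟨hs, h.symm⟩)
    · rw [mval, notMem_support_iff.mp hs, zero_mul] at h
      exact hEf h
  have hgl : ∀ e, e ≠ e₀ → MvPolynomial.eval (tpt a) g < mval g e a := by
    intro e he
    refine lt_of_le_of_ne (eval_le_mval a g e) fun h => ?_
    by_cases hs : e ∈ g.support
    · exact he (he₀u e ⟨hs, h.symm⟩)
    · rw [mval, notMem_support_iff.mp hs, zero_mul] at h
      exact hEg h
  have hEmul : MvPolynomial.eval (tpt a) (f * g)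
      = MvPolynomial.eval (tpt a) f * MvPolynomial.eval (tpt a) g := map_mul _ _ _
  have hE0 : MvPolynomial.eval (tpt a) (f * g) ≠ 0 := by
    rw [hEmul]; exact mul_ne_zero hEf hEg
  have key : ∀ k, mval (f * g) k a
      = ∑ p ∈ Finset.HasAntidiagonal.antidiagonal k, mval f p.1 a * mval g p.2 a := by
    intro k
    rw [mval_def, coeff_mul, Finset.sum_mul]
    refine Finset.sum_congr rfl fun p hp => ?_
    rw [← Finset.HasAntidiagonal.mem_antidiagonal.mp hp, tmon_add, mval_def, mval_def]
    ring
  have pairlt : ∀ p : (Fin n →₀ ℕ) × (Fin n →₀ ℕ), p ≠ (d₀, e₀) →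
      MvPolynomial.eval (tpt a) (f * g) < mval f p.1 a * mval g p.2 a := by
    intro p hp
    rw [hEmul, ← untrop_lt_iff, untrop_mul, untrop_mul]
    by_cases h1 : p.1 = d₀
    · have h2 : p.2 ≠ e₀ := fun h => hp (Prod.ext h1 h)
      exact WithTop.add_lt_add_of_le_of_lt (untrop_ne_top hEf)
        (untrop_le_iff.mpr (eval_le_mval a f p.1)) (untrop_lt_iff.mpr (hgl p.2 h2))
    · exact WithTop.add_lt_add_of_lt_of_le (untrop_ne_top hEg)
        (untrop_lt_iff.mpr (hfl p.1 h1)) (untrop_le_iff.mpr (eval_le_mval a g p.2))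
  have hvw : mval (f * g) (d₀ + e₀) a = MvPolynomial.eval (tpt a) (f * g) := by
    rw [key]
    apply le_antisymm
    · rw [← untrop_le_iff, Finset.untrop_sum']
      refine le_trans (Finset.inf_le (Finset.HasAntidiagonal.mem_antidiagonal.mpr rfl :
        (d₀, e₀) ∈ Finset.HasAntidiagonal.antidiagonal (d₀ + e₀))) ?_
      simp only [Function.comp_apply]
      rw [hd₀e, he₀e, hEmul]
    · rw [← untrop_le_iff, Finset.untrop_sum']
      refine Finset.le_inf fun p hp => ?_
      simp only [Function.comp_apply]
      by_cases hpd : p = (d₀, e₀)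
      · subst hpd
        rw [hd₀e, he₀e, hEmul]
      · exact untrop_le_iff.mpr (pairlt p hpd).le
  have hws : (d₀ + e₀) ∈ (f * g).support := by
    rw [mem_support_iff]
    intro h
    apply hE0
    rw [← hvw, mval_def, h, zero_mul]
  refine ⟨d₀ + e₀, ⟨hws, hvw⟩, ?_⟩
  rintro k ⟨hks, hke⟩
  by_contra hkw
  have hlt : MvPolynomial.eval (tpt a) (f * g) < mval (f * g) k a := by
    rw [key, ← untrop_lt_iff, Finset.untrop_sum']
    refine (Finset.lt_inf_iff (lt_top_iff_ne_top.mpr (untrop_ne_top hE0))).mpr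
      fun p hp => ?_
    refine untrop_lt_iff.mpr (pairlt p fun h => hkw ?_)
    rw [← Finset.HasAntidiagonal.mem_antidiagonal.mp hp, h]
  exact hlt.ne' hke
end

section
/- Let Z ⊆ (Fin n → ℝ) and let f₁, f₂, h ∈ Rₙ be nonzero with f₁.support ∩ f₂.support = ∅. Suppose that every a ∈ Z is a corner root of f₁ + h and of f₂ + h. Then every a ∈ Z is a corner root of h * (f₁ + f₂). -/
open MvPolynomial

namespace TropCornerAux

lemma tadd_le_left (x y : 𝕋) : x + y ≤ x := by
  rcases le_total x y with hle | hle
  · rw [Tropical.add_eq_left hle]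
  · rw [Tropical.add_eq_right hle]; exact hle

lemma tadd_le_right (x y : 𝕋) : x + y ≤ y := by
  rw [add_comm]; exact tadd_le_left y x

lemma tsum_le {ι : Type*} (s : Finset ι) (F : ι → 𝕋) {i : ι} (hi : i ∈ s) :
    (∑ j ∈ s, F j) ≤ F i := by
  rw [← Tropical.untrop_le_iff, Finset.untrop_sum']
  exact Finset.inf_le hi

lemma tsum_attained {ι : Type*} (s : Finset ι) (hs : s.Nonempty) (F : ι → 𝕋) :
    ∃ i ∈ s, (∑ j ∈ s, F j) = F i := by
  obtain ⟨i, hi, hieq⟩ := Finset.exists_mem_eq_inf s hs (Tropical.untrop ∘ F)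
  refine ⟨i, hi, Tropical.untrop_injective ?_⟩
  rw [Finset.untrop_sum']; exact hieq

lemma teq_zero_of_untrop {x : 𝕋} (hx : Tropical.untrop x = ⊤) : x = 0 :=
  Tropical.untrop_injective (by rw [hx, Tropical.untrop_zero])

lemma tmul_ne_zero {x y : 𝕋} (hx : x ≠ 0) (hy : y ≠ 0) : x * y ≠ 0 := by
  intro h0
  have h1 : Tropical.untrop (x * y) = ⊤ := by rw [h0, Tropical.untrop_zero]
  rw [Tropical.untrop_mul] at h1
  rcases WithTop.add_eq_top.mp h1 with hc | hc
  · exact hx (teq_zero_of_untrop hc)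
  · exact hy (teq_zero_of_untrop hc)

lemma tmul_le_tmul {x x' y y' : 𝕋} (h1 : x ≤ x') (h2 : y ≤ y') : x * y ≤ x' * y' := by
  rw [← Tropical.untrop_le_iff] at h1 h2 ⊢
  rw [Tropical.untrop_mul, Tropical.untrop_mul]
  exact add_le_add h1 h2

lemma nsmul_coe (k : ℕ) (r : ℝ) : k • (r : WithTop ℝ) = ((k • r : ℝ) : WithTop ℝ) := by
  induction k with
  | zero => simp
  | succ m ih => rw [succ_nsmul, succ_nsmul, WithTop.coe_add, ih]

variable {n : ℕ} (a : Fin n → ℝ)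

lemma eval_eq_sum (f : MvPolynomial (Fin n) 𝕋) :
    MvPolynomial.eval (tpt a) f = ∑ d ∈ f.support, mval f d a := by
  rw [MvPolynomial.eval_eq']; rfl

lemma mval_coeff_zero {f : MvPolynomial (Fin n) 𝕋} {d : Fin n →₀ ℕ}
    (hc : f.coeff d = 0) : mval f d a = 0 := by
  simp [mval, hc]

lemma eval_le_mval (f : MvPolynomial (Fin n) 𝕋) (d : Fin n →₀ ℕ) :
    MvPolynomial.eval (tpt a) f ≤ mval f d a := by
  by_cases hd : d ∈ f.support
  · rw [eval_eq_sum]; exact tsum_le _ _ hd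
  · rw [mval_coeff_zero a (MvPolynomial.notMem_support_iff.mp hd)]
    exact Tropical.le_zero _

lemma mval_ne_zero (f : MvPolynomial (Fin n) 𝕋) {d : Fin n →₀ ℕ}
    (hd : d ∈ f.support) : mval f d a ≠ 0 := by
  have hc : f.coeff d ≠ 0 := MvPolynomial.mem_support_iff.mp hd
  refine tmul_ne_zero hc ?_
  intro h0
  have h1 : Tropical.untrop (∏ i, (tpt a i) ^ d i) = ⊤ := by rw [h0, Tropical.untrop_zero]
  rw [untrop_prod] at h1
  obtain ⟨i, _, hi⟩ := WithTop.sum_eq_top.mp h1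
  rw [Tropical.untrop_pow, tpt, Tropical.untrop_trop, nsmul_coe] at hi
  exact WithTop.coe_ne_top hi

lemma eval_ne_zero (f : MvPolynomial (Fin n) 𝕋) (hf : f ≠ 0) :
    MvPolynomial.eval (tpt a) f ≠ 0 := by
  obtain ⟨d, hd⟩ := MvPolynomial.support_nonempty.mpr hf
  intro h0
  have hle := eval_le_mval a f d
  rw [h0] at hle
  exact mval_ne_zero a f hd (le_antisymm (Tropical.le_zero _) hle)

lemma mval_add (f g : MvPolynomial (Fin n) 𝕋) (d : Fin n →₀ ℕ) :
    mval (f + g) d a = mval f d a + mval g d a := by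
  simp [mval, MvPolynomial.coeff_add, add_mul]

lemma add_ne_zero_right (f g : MvPolynomial (Fin n) 𝕋) (hg : g ≠ 0) : f + g ≠ 0 := by
  obtain ⟨d, hd⟩ := MvPolynomial.support_nonempty.mpr hg
  intro h0
  have hc : (f + g).coeff d = 0 := by rw [h0, MvPolynomial.coeff_zero]
  rw [MvPolynomial.coeff_add] at hc
  have hy : g.coeff d = 0 := le_antisymm (Tropical.le_zero _) (hc ▸ tadd_le_right _ _)
  exact (MvPolynomial.mem_support_iff.mp hd) hy

lemma exists_argmin (f : MvPolynomial (Fin n) 𝕋) (hf : f ≠ 0) :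
    ∃ d ∈ f.support, mval f d a = MvPolynomial.eval (tpt a) f := by
  obtain ⟨d, hd, hdm⟩ := tsum_attained f.support (MvPolynomial.support_nonempty.mpr hf)
    (fun d => mval f d a)
  exact ⟨d, hd, by rw [eval_eq_sum, hdm]⟩

lemma prod_key (p q : MvPolynomial (Fin n) 𝕋) {e d : Fin n →₀ ℕ}
    (he : e ∈ p.support) (hd : d ∈ q.support)
    (hme : mval p e a = MvPolynomial.eval (tpt a) p)
    (hmd : mval q d a = MvPolynomial.eval (tpt a) q) :
    (e + d) ∈ (p * q).support ∧
      mval (p * q) (e + d) a = MvPolynomial.eval (tpt a) (p * q) := by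
  classical
  have hpe : p.coeff e ≠ 0 := MvPolynomial.mem_support_iff.mp he
  have hqd : q.coeff d ≠ 0 := MvPolynomial.mem_support_iff.mp hd
  have hmem : ((e, d) : (Fin n →₀ ℕ) × (Fin n →₀ ℕ)) ∈ Finset.HasAntidiagonal.antidiagonal (e + d) :=
    Finset.HasAntidiagonal.mem_antidiagonal.mpr rfl
  have hA : (p * q).coeff (e + d) ≤ p.coeff e * q.coeff d := by
    rw [MvPolynomial.coeff_mul]
    exact tsum_le _ (fun x => p.coeff x.1 * q.coeff x.2) hmem
  have hprod : (∏ i, (tpt a i) ^ (e + d) i) =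
      (∏ i, (tpt a i) ^ e i) * (∏ i, (tpt a i) ^ d i) := by
    rw [← Finset.prod_mul_distrib]
    refine Finset.prod_congr rfl fun i _ => ?_
    rw [Finsupp.add_apply, pow_add]
  have hsplit : (p.coeff e * q.coeff d) * (∏ i, (tpt a i) ^ (e + d) i)
      = mval p e a * mval q d a := by
    rw [mval, mval, hprod]; ring
  have hC : mval (p * q) (e + d) a ≤ mval p e a * mval q d a := by
    rw [← hsplit, mval]
    exact tmul_le_tmul hA le_rfl
  have hB : (e + d) ∈ (p * q).support := by
    rw [MvPolynomial.mem_support_iff]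
    intro h0
    have h1 : p.coeff e * q.coeff d = 0 :=
      le_antisymm (Tropical.le_zero _) (h0 ▸ hA)
    exact tmul_ne_zero hpe hqd h1
  have hE : MvPolynomial.eval (tpt a) (p * q)
      = MvPolynomial.eval (tpt a) p * MvPolynomial.eval (tpt a) q := map_mul _ _ _
  refine ⟨hB, le_antisymm ?_ (eval_le_mval a _ _)⟩
  calc mval (p * q) (e + d) a ≤ mval p e a * mval q d a := hC
    _ = MvPolynomial.eval (tpt a) (p * q) := by rw [hme, hmd, hE]

lemma corner_of_two (p q : MvPolynomial (Fin n) 𝕋) (hp : p ≠ 0) (hq : q ≠ 0)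
    (H : IsCornerRoot a p ∨ IsCornerRoot a q) :
    IsCornerRoot a (p * q) := by
  have cancel : ∀ {x y z : Fin n →₀ ℕ}, x + z = y + z → x = y := by
    intro x y z hxy
    ext i
    have := DFunLike.congr_fun hxy i
    simp only [Finsupp.add_apply] at this
    omega
  have cancel' : ∀ {x y z : Fin n →₀ ℕ}, z + x = z + y → x = y := by
    intro x y z hxy
    ext i
    have := DFunLike.congr_fun hxy i
    simp only [Finsupp.add_apply] at this
    omega
  rcases H with ⟨e₁, he₁, e₂, he₂, hne, hm₁, hm₂⟩ | ⟨d₁, hd₁, d₂, hd₂, hne, hm₁, hm₂⟩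
  · obtain ⟨d, hd, hmd⟩ := exists_argmin a q hq
    obtain ⟨hs₁, hv₁⟩ := prod_key a p q he₁ hd hm₁ hmd
    obtain ⟨hs₂, hv₂⟩ := prod_key a p q he₂ hd hm₂ hmd
    exact ⟨e₁ + d, hs₁, e₂ + d, hs₂, fun hcon => hne (cancel hcon), hv₁, hv₂⟩
  · obtain ⟨e, he, hme⟩ := exists_argmin a p hp
    obtain ⟨hs₁, hv₁⟩ := prod_key a p q he hd₁ hme hm₁
    obtain ⟨hs₂, hv₂⟩ := prod_key a p q he hd₂ hme hm₂
    exact ⟨e + d₁, hs₁, e + d₂, hs₂, fun hcon => hne (cancel' hcon), hv₁, hv₂⟩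

lemma dich (f g : MvPolynomial (Fin n) 𝕋) (hg : g ≠ 0) {d : Fin n →₀ ℕ}
    (hv : mval (f + g) d a = MvPolynomial.eval (tpt a) (f + g)) :
    (d ∈ f.support ∧ mval f d a = MvPolynomial.eval (tpt a) f ∧
      MvPolynomial.eval (tpt a) f = MvPolynomial.eval (tpt a) (f + g))
  ∨ (d ∈ g.support ∧ mval g d a = MvPolynomial.eval (tpt a) g ∧
      MvPolynomial.eval (tpt a) g = MvPolynomial.eval (tpt a) (f + g)) := by
  have hVne : MvPolynomial.eval (tpt a) (f + g) ≠ 0 :=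
    eval_ne_zero a _ (add_ne_zero_right f g hg)
  have hsum : mval f d a + mval g d a = MvPolynomial.eval (tpt a) (f + g) := by
    rw [← mval_add]; exact hv
  have hEadd : MvPolynomial.eval (tpt a) (f + g)
      = MvPolynomial.eval (tpt a) f + MvPolynomial.eval (tpt a) g := map_add _ _ _
  rcases le_total (mval f d a) (mval g d a) with hle | hle
  · left
    have hfd : mval f d a = MvPolynomial.eval (tpt a) (f + g) := by
      rw [← hsum, Tropical.add_eq_left hle]
    have h1 : MvPolynomial.eval (tpt a) f ≤ MvPolynomial.eval (tpt a) (f + g) := by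
      rw [← hfd]; exact eval_le_mval a f d
    have h2 : MvPolynomial.eval (tpt a) (f + g) ≤ MvPolynomial.eval (tpt a) f := by
      rw [hEadd]; exact tadd_le_left _ _
    have hEf : MvPolynomial.eval (tpt a) f = MvPolynomial.eval (tpt a) (f + g) :=
      le_antisymm h1 h2
    refine ⟨?_, hfd.trans hEf.symm, hEf⟩
    rw [MvPolynomial.mem_support_iff]
    intro h0
    exact hVne (by rw [← hfd, mval_coeff_zero a h0])
  · right
    have hfd : mval g d a = MvPolynomial.eval (tpt a) (f + g) := by
      rw [← hsum, Tropical.add_eq_right hle]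
    have h1 : MvPolynomial.eval (tpt a) g ≤ MvPolynomial.eval (tpt a) (f + g) := by
      rw [← hfd]; exact eval_le_mval a g d
    have h2 : MvPolynomial.eval (tpt a) (f + g) ≤ MvPolynomial.eval (tpt a) g := by
      rw [hEadd]; exact tadd_le_right _ _
    have hEf : MvPolynomial.eval (tpt a) g = MvPolynomial.eval (tpt a) (f + g) :=
      le_antisymm h1 h2
    refine ⟨?_, hfd.trans hEf.symm, hEf⟩
    rw [MvPolynomial.mem_support_iff]
    intro h0
    exact hVne (by rw [← hfd, mval_coeff_zero a h0])

lemma process (f g : MvPolynomial (Fin n) 𝕋) (hg : g ≠ 0) (hc : IsCornerRoot a (f + g)) :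
    IsCornerRoot a g
  ∨ (IsCornerRoot a f ∧ MvPolynomial.eval (tpt a) f ≤ MvPolynomial.eval (tpt a) g)
  ∨ MvPolynomial.eval (tpt a) f = MvPolynomial.eval (tpt a) g := by
  obtain ⟨d₁, _, d₂, _, hne, hv₁, hv₂⟩ := hc
  have hle : MvPolynomial.eval (tpt a) (f + g) ≤ MvPolynomial.eval (tpt a) g := by
    rw [map_add]; exact tadd_le_right _ _
  rcases dich a f g hg hv₁ with ⟨hs1, hm1, hE1⟩ | ⟨hs1, hm1, hE1⟩ <;>
    rcases dich a f g hg hv₂ with ⟨hs2, hm2, hE2⟩ | ⟨hs2, hm2, hE2⟩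
  · exact Or.inr (Or.inl ⟨⟨d₁, hs1, d₂, hs2, hne, hm1, hm2⟩, hE1.trans_le hle⟩)
  · exact Or.inr (Or.inr (hE1.trans hE2.symm))
  · exact Or.inr (Or.inr (hE2.trans hE1.symm))
  · exact Or.inl ⟨d₁, hs1, d₂, hs2, hne, hm1, hm2⟩

lemma lift_left (p q : MvPolynomial (Fin n) 𝕋)
    (hdisj : p.support ∩ q.support = ∅) {d : Fin n →₀ ℕ} (hd : d ∈ p.support)
    (hm : mval p d a = MvPolynomial.eval (tpt a) p)
    (hle : MvPolynomial.eval (tpt a) p ≤ MvPolynomial.eval (tpt a) q) :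
    d ∈ (p + q).support ∧ mval (p + q) d a = MvPolynomial.eval (tpt a) (p + q) := by
  have hdq : d ∉ q.support := fun h2 =>
    (Finset.eq_empty_iff_forall_notMem.mp hdisj d) (Finset.mem_inter.mpr ⟨hd, h2⟩)
  have hd2 : q.coeff d = 0 := MvPolynomial.notMem_support_iff.mp hdq
  have hmv : mval (p + q) d a = mval p d a := by
    rw [mval_add, mval_coeff_zero a hd2, add_zero]
  have hE : MvPolynomial.eval (tpt a) (p + q) = MvPolynomial.eval (tpt a) p := by
    rw [map_add, Tropical.add_eq_left hle]
  constructor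
  · rw [MvPolynomial.mem_support_iff]
    intro h0
    exact mval_ne_zero a p hd (by rw [← hmv, mval_coeff_zero a h0])
  · rw [hmv, hm, hE]

end TropCornerAux

open TropCornerAux in
/-- If every `a ∈ Z` is a corner root of `f₁ + h` and of `f₂ + h`, with `f₁` and `f₂` of
disjoint supports, then every `a ∈ Z` is a corner root of `h * (f₁ + f₂)`. -/
theorem stmt8 {n : ℕ} (Z : Set (Fin n → ℝ)) (f₁ f₂ h : MvPolynomial (Fin n) 𝕋)
    (hf₁0 : f₁ ≠ 0) (hf₂0 : f₂ ≠ 0) (hh0 : h ≠ 0)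
    (hdisj : f₁.support ∩ f₂.support = ∅)
    (h1 : ∀ a ∈ Z, IsCornerRoot a (f₁ + h))
    (h2 : ∀ a ∈ Z, IsCornerRoot a (f₂ + h)) :
    ∀ a ∈ Z, IsCornerRoot a (h * (f₁ + f₂)) := by
  intro a haZ
  have hdisj' : f₂.support ∩ f₁.support = ∅ := by rwa [Finset.inter_comm]
  have hF0 : f₁ + f₂ ≠ 0 := add_ne_zero_right f₁ f₂ hf₂0
  have lift_right : ∀ {d : Fin n →₀ ℕ}, d ∈ f₂.support →
      mval f₂ d a = MvPolynomial.eval (tpt a) f₂ →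
      MvPolynomial.eval (tpt a) f₂ ≤ MvPolynomial.eval (tpt a) f₁ →
      d ∈ (f₁ + f₂).support ∧ mval (f₁ + f₂) d a = MvPolynomial.eval (tpt a) (f₁ + f₂) := by
    intro d hd hm hle
    have := lift_left a f₂ f₁ hdisj' hd hm hle
    rwa [add_comm f₂ f₁] at this
  have caseAA : ∀ (H1 : IsCornerRoot a f₁ ∧ MvPolynomial.eval (tpt a) f₁ ≤ MvPolynomial.eval (tpt a) h)
      (H2 : IsCornerRoot a f₂ ∧ MvPolynomial.eval (tpt a) f₂ ≤ MvPolynomial.eval (tpt a) h),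
      IsCornerRoot a (h * (f₁ + f₂)) := by
    rintro ⟨⟨d₁, hd₁, d₂, hd₂, hne, hm₁, hm₂⟩, hle₁⟩ ⟨⟨e₁, he₁, e₂, he₂, hne', hm₁', hm₂'⟩, hle₂⟩
    apply corner_of_two a h (f₁ + f₂) hh0 hF0
    right
    rcases le_total (MvPolynomial.eval (tpt a) f₁) (MvPolynomial.eval (tpt a) f₂) with hc | hc
    · obtain ⟨hs₁, hv₁⟩ := lift_left a f₁ f₂ hdisj hd₁ hm₁ hc
      obtain ⟨hs₂, hv₂⟩ := lift_left a f₁ f₂ hdisj hd₂ hm₂ hc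
      exact ⟨d₁, hs₁, d₂, hs₂, hne, hv₁, hv₂⟩
    · obtain ⟨hs₁, hv₁⟩ := lift_right he₁ hm₁' hc
      obtain ⟨hs₂, hv₂⟩ := lift_right he₂ hm₂' hc
      exact ⟨e₁, hs₁, e₂, hs₂, hne', hv₁, hv₂⟩
  have caseAB : ∀ (H1 : IsCornerRoot a f₁ ∧ MvPolynomial.eval (tpt a) f₁ ≤ MvPolynomial.eval (tpt a) h)
      (H2 : MvPolynomial.eval (tpt a) f₂ = MvPolynomial.eval (tpt a) h),
      IsCornerRoot a (h * (f₁ + f₂)) := by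
    rintro ⟨⟨d₁, hd₁, d₂, hd₂, hne, hm₁, hm₂⟩, hle₁⟩ H2
    apply corner_of_two a h (f₁ + f₂) hh0 hF0
    right
    have hc : MvPolynomial.eval (tpt a) f₁ ≤ MvPolynomial.eval (tpt a) f₂ := by
      rw [H2]; exact hle₁
    obtain ⟨hs₁, hv₁⟩ := lift_left a f₁ f₂ hdisj hd₁ hm₁ hc
    obtain ⟨hs₂, hv₂⟩ := lift_left a f₁ f₂ hdisj hd₂ hm₂ hc
    exact ⟨d₁, hs₁, d₂, hs₂, hne, hv₁, hv₂⟩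
  have caseBA : ∀ (H1 : MvPolynomial.eval (tpt a) f₁ = MvPolynomial.eval (tpt a) h)
      (H2 : IsCornerRoot a f₂ ∧ MvPolynomial.eval (tpt a) f₂ ≤ MvPolynomial.eval (tpt a) h),
      IsCornerRoot a (h * (f₁ + f₂)) := by
    rintro H1 ⟨⟨e₁, he₁, e₂, he₂, hne', hm₁', hm₂'⟩, hle₂⟩
    apply corner_of_two a h (f₁ + f₂) hh0 hF0
    right
    have hc : MvPolynomial.eval (tpt a) f₂ ≤ MvPolynomial.eval (tpt a) f₁ := by
      rw [H1]; exact hle₂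
    obtain ⟨hs₁, hv₁⟩ := lift_right he₁ hm₁' hc
    obtain ⟨hs₂, hv₂⟩ := lift_right he₂ hm₂' hc
    exact ⟨e₁, hs₁, e₂, hs₂, hne', hv₁, hv₂⟩
  have caseBB : ∀ (H1 : MvPolynomial.eval (tpt a) f₁ = MvPolynomial.eval (tpt a) h)
      (H2 : MvPolynomial.eval (tpt a) f₂ = MvPolynomial.eval (tpt a) h),
      IsCornerRoot a (h * (f₁ + f₂)) := by
    intro H1 H2
    have hMeq : MvPolynomial.eval (tpt a) f₁ = MvPolynomial.eval (tpt a) f₂ :=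
      H1.trans H2.symm
    obtain ⟨d, hd, hmd⟩ := exists_argmin a f₁ hf₁0
    obtain ⟨e, he, hme⟩ := exists_argmin a f₂ hf₂0
    have hdne : d ≠ e := by
      intro hde
      exact (Finset.eq_empty_iff_forall_notMem.mp hdisj d)
        (Finset.mem_inter.mpr ⟨hd, hde ▸ he⟩)
    apply corner_of_two a h (f₁ + f₂) hh0 hF0
    right
    obtain ⟨hs₁, hv₁⟩ := lift_left a f₁ f₂ hdisj hd hmd hMeq.le
    obtain ⟨hs₂, hv₂⟩ := lift_right he hme hMeq.ge
    exact ⟨d, hs₁, e, hs₂, hdne, hv₁, hv₂⟩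
  rcases process a f₁ h hh0 (h1 a haZ) with HH | H1 | H1
  · exact corner_of_two a h (f₁ + f₂) hh0 hF0 (Or.inl HH)
  · rcases process a f₂ h hh0 (h2 a haZ) with HH | H2 | H2
    · exact corner_of_two a h (f₁ + f₂) hh0 hF0 (Or.inl HH)
    · exact caseAA H1 H2
    · exact caseAB H1 H2
  · rcases process a f₂ h hh0 (h2 a haZ) with HH | H2 | H2
    · exact corner_of_two a h (f₁ + f₂) hh0 hF0 (Or.inl HH)
    · exact caseBA H1 H2
    · exact caseBB H1 H2
end

section
/- Let S and T be finite nonempty sets of tropical monomials in n variables such that every element of S is essential in S, every element of T is essential in T, and f_S(x) = f_T(x) for all x ∈ ℝⁿ. Then S = T. In other words, the decomposition of a tropical polynomial function as a maximum of essential affine monomial functions is unique. -/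
/-- The affine function on `ℝⁿ` defined by a tropical monomial `(c, v)` in logarithmic
max-plus notation. -/
def monoFun {n : ℕ} (p : ℝ × (Fin n → ℝ)) (x : Fin n → ℝ) : ℝ :=
  p.1 + ∑ i, p.2 i * x i

/-- The tropical polynomial function associated to a finite nonempty set of tropical
monomials: the pointwise maximum of the corresponding affine functions. -/
noncomputable def polyFun {n : ℕ} (S : Finset (ℝ × (Fin n → ℝ))) (hS : S.Nonempty)
    (x : Fin n → ℝ) : ℝ :=
  S.sup' hS (fun p => monoFun p x)

/-- A monomial `p ∈ S` is essential in `S` if it strictly dominates all the other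
monomials of `S` at some point. -/
def Essential {n : ℕ} (S : Finset (ℝ × (Fin n → ℝ))) (p : ℝ × (Fin n → ℝ)) : Prop :=
  ∃ x : Fin n → ℝ, ∀ q ∈ S, q ≠ p → monoFun q x < monoFun p x

open MeasureTheory

lemma continuous_monoFun {n : ℕ} (p : ℝ × (Fin n → ℝ)) : Continuous (monoFun p) :=
  continuous_const.add (continuous_finset_sum _ fun i _ =>
    continuous_const.mul (continuous_apply i))

/-- If `q ≠ p` as monomials, the set where their affine functions agree is null. -/
lemma eqset_null {n : ℕ} (p q : ℝ × (Fin n → ℝ)) (hne : q ≠ p) :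
    volume {y : Fin n → ℝ | monoFun q y = monoFun p y} = 0 := by
  by_cases hw : q.2 = p.2
  · have ha : q.1 ≠ p.1 := by
      intro h; exact hne (Prod.ext h hw)
    have : {y : Fin n → ℝ | monoFun q y = monoFun p y} = ∅ := by
      ext y; simp [monoFun, hw, ha]
    simp [this]
  · obtain ⟨i₀, hi₀⟩ := Function.ne_iff.mp hw
    set w : Fin n → ℝ := fun i => q.2 i - p.2 i with hwdef
    have hwi₀ : w i₀ ≠ 0 := sub_ne_zero.mpr hi₀
    let f : (Fin n → ℝ) →ₗ[ℝ] ℝ :=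
      { toFun := fun y => ∑ i, w i * y i
        map_add' := fun y z => by
          simp [Pi.add_apply, mul_add, Finset.sum_add_distrib]
        map_smul' := fun c y => by
          simp only [Pi.smul_apply, smul_eq_mul, RingHom.id_apply, Finset.mul_sum]
          exact Finset.sum_congr rfl fun i _ => by ring }
    set y₀ : Fin n → ℝ := fun j => if j = i₀ then (p.1 - q.1) / w i₀ else 0 with hy₀def
    have hfy₀ : f y₀ = p.1 - q.1 := by
      simp only [f, LinearMap.coe_mk, AddHom.coe_mk, hy₀def]
      rw [Finset.sum_eq_single i₀]
      · rw [if_pos rfl]; field_simp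
      · intro j _ hj; rw [if_neg hj, mul_zero]
      · intro hmem; exact absurd (Finset.mem_univ i₀) hmem
    have key : ∀ y : Fin n → ℝ, f y = (∑ i, q.2 i * y i) - ∑ i, p.2 i * y i := by
      intro y
      simp only [f, LinearMap.coe_mk, AddHom.coe_mk]
      rw [← Finset.sum_sub_distrib]
      exact Finset.sum_congr rfl fun i _ => by ring
    have hEset : {y : Fin n → ℝ | monoFun q y = monoFun p y}
        = (fun y => y + (-y₀)) ⁻¹' (LinearMap.ker f : Set (Fin n → ℝ)) := by
      ext y
      simp only [Set.mem_setOf_eq, Set.mem_preimage, SetLike.mem_coe, LinearMap.mem_ker,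
        map_add, map_neg, hfy₀, key y, monoFun]
      constructor <;> intro hy <;> linarith
    rw [hEset]
    rw [measure_preimage_add_right]
    apply Measure.addHaar_submodule
    intro htop
    have : Pi.single i₀ (1 : ℝ) ∈ LinearMap.ker f := htop ▸ Submodule.mem_top
    rw [LinearMap.mem_ker] at this
    simp only [f, LinearMap.coe_mk, AddHom.coe_mk] at this
    rw [Finset.sum_eq_single i₀] at this
    · simp at this; exact hwi₀ this
    · intro j _ hj
      rw [Pi.single_apply, if_neg hj, mul_zero]
    · intro hmem; exact absurd (Finset.mem_univ i₀) hmem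

/-- Every essential monomial of `S` belongs to `T` when the two tropical polynomial
functions agree. -/
lemma essential_mem {n : ℕ} (S T : Finset (ℝ × (Fin n → ℝ))) (hS : S.Nonempty)
    (hT : T.Nonempty) (h : ∀ x : Fin n → ℝ, polyFun S hS x = polyFun T hT x)
    (p : ℝ × (Fin n → ℝ)) (hp : p ∈ S) (hess : Essential S p) : p ∈ T := by
  obtain ⟨x₀, hx₀⟩ := hess
  by_contra hpT
  set U : Set (Fin n → ℝ) :=
    ⋂ q ∈ S.erase p, {y : Fin n → ℝ | monoFun q y < monoFun p y} with hUdef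
  have hUopen : IsOpen U :=
    isOpen_biInter_finset fun q _ =>
      isOpen_lt (continuous_monoFun q) (continuous_monoFun p)
  have hmemU : ∀ y : Fin n → ℝ,
      y ∈ U ↔ ∀ q ∈ S, q ≠ p → monoFun q y < monoFun p y := by
    intro y
    simp only [hUdef, Set.mem_iInter, Set.mem_setOf_eq, Finset.mem_erase]
    constructor
    · intro hy q hq hqp; exact hy q ⟨hqp, hq⟩
    · rintro hy q ⟨hqp, hq⟩; exact hy q hq hqp
  have hx₀U : x₀ ∈ U := (hmemU x₀).mpr hx₀
  have hpoly : ∀ y ∈ U, polyFun S hS y = monoFun p y := by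
    intro y hy
    apply le_antisymm
    · apply Finset.sup'_le
      intro q hq
      rcases eq_or_ne q p with rfl | hqp
      · exact le_rfl
      · exact le_of_lt ((hmemU y).mp hy q hq hqp)
    · exact Finset.le_sup' (fun q => monoFun q y) hp
  have hcover : U ⊆ ⋃ q ∈ (T : Set (ℝ × (Fin n → ℝ))),
      {y : Fin n → ℝ | monoFun q y = monoFun p y} := by
    intro y hy
    obtain ⟨q, hqT, hq⟩ := Finset.exists_mem_eq_sup' hT (fun r => monoFun r y)
    refine Set.mem_biUnion hqT ?_
    have : polyFun T hT y = monoFun q y := hq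
    have h1 : polyFun T hT y = monoFun p y := by rw [← h y]; exact hpoly y hy
    simpa [Set.mem_setOf_eq] using (this.symm.trans h1)
  have hnull : volume U = 0 := by
    apply measure_mono_null hcover
    apply measure_biUnion_null_iff T.countable_toSet |>.mpr
    intro q hq
    exact eqset_null p q (fun hqp => hpT (hqp ▸ hq))
  have hpos : 0 < volume U := hUopen.measure_pos volume ⟨x₀, hx₀U⟩
  rw [hnull] at hpos
  exact lt_irrefl 0 hpos

/-- Uniqueness of the decomposition of a tropical polynomial function as a maximum of
essential affine monomial functions. -/
theorem stmt9 {n : ℕ} (S T : Finset (ℝ × (Fin n → ℝ))) (hS : S.Nonempty)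
    (hT : T.Nonempty) (hSe : ∀ p ∈ S, Essential S p) (hTe : ∀ p ∈ T, Essential T p)
    (h : ∀ x : Fin n → ℝ, polyFun S hS x = polyFun T hT x) : S = T := by
  apply Finset.Subset.antisymm
  · intro p hp
    exact essential_mem S T hS hT h p hp (hSe p hp)
  · intro p hp
    exact essential_mem T S hT hS (fun x => (h x).symm) p hp (hTe p hp)
end

section
/- Let S be a finite set of tropical monomials in n variables with at least two elements, each of which is essential in S. Then f_S has a corner root: there exist a ∈ ℝⁿ and distinct pairs (c₁, v₁) ≠ (c₂, v₂) in S with c₁ + ∑ i, v₁ i * a i = c₂ + ∑ i, v₂ i * a i = f_S(a). -/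
lemma monoFun_continuous {n : ℕ} (p : ℝ × (Fin n → ℝ)) (x y : Fin n → ℝ) :
    Continuous (fun t : ℝ => monoFun p (fun i => x i + t * (y i - x i))) := by
  unfold monoFun
  continuity

/-- A tropical polynomial function with at least two essential monomials has a corner
root. -/
theorem stmt10 {n : ℕ} (S : Finset (ℝ × (Fin n → ℝ))) (hS : S.Nonempty)
    (hcard : 2 ≤ S.card) (hSe : ∀ p ∈ S, Essential S p) :
    ∃ a : Fin n → ℝ, ∃ p ∈ S, ∃ q ∈ S, p ≠ q ∧
      monoFun p a = polyFun S hS a ∧ monoFun q a = polyFun S hS a := by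
  obtain ⟨p, hp, q0, hq0, hpq0⟩ := Finset.one_lt_card.mp hcard
  obtain ⟨x, hx⟩ := hSe p hp
  obtain ⟨y, hy⟩ := hSe q0 hq0
  have hq0e : q0 ∈ S.erase p := Finset.mem_erase.mpr ⟨hpq0.symm, hq0⟩
  have hne : (S.erase p).Nonempty := ⟨q0, hq0e⟩
  let ℓ : ℝ → (Fin n → ℝ) := fun t i => x i + t * (y i - x i)
  let g : (Fin n → ℝ) → ℝ := fun z => (S.erase p).sup' hne (fun r => monoFun r z)
  let h : ℝ → ℝ := fun t => monoFun p (ℓ t) - g (ℓ t)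
  have hcont : Continuous h := by
    apply Continuous.sub (monoFun_continuous p x y)
    exact Continuous.finset_sup'_apply hne (fun r _ => monoFun_continuous r x y)
  have hl0 : ℓ 0 = x := by funext i; simp [ℓ]
  have hl1 : ℓ 1 = y := by funext i; simp [ℓ]
  have h0 : 0 < h 0 := by
    have : g (ℓ 0) < monoFun p (ℓ 0) := by
      rw [hl0]
      obtain ⟨r, hr, hre⟩ := Finset.exists_mem_eq_sup' hne (fun r => monoFun r x)
      show (S.erase p).sup' hne (fun r => monoFun r x) < monoFun p x
      rw [hre]
      exact hx r (Finset.mem_of_mem_erase hr) (Finset.ne_of_mem_erase hr)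
    simpa [h] using this
  have h1 : h 1 < 0 := by
    have h1' : monoFun p (ℓ 1) < g (ℓ 1) := by
      rw [hl1]
      calc monoFun p y < monoFun q0 y := hy p hp hpq0
        _ ≤ g y := Finset.le_sup' (fun r => monoFun r y) hq0e
    simpa [h] using h1'
  have hmem : (0 : ℝ) ∈ Set.Icc (h 1) (h 0) := ⟨h1.le, h0.le⟩
  obtain ⟨t, _, ht⟩ := intermediate_value_Icc' (by norm_num : (0:ℝ) ≤ 1)
    hcont.continuousOn hmem
  set a := ℓ t with ha
  have heq : monoFun p a = g a := by
    have := sub_eq_zero.mp ht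
    simpa [h, ha] using this
  obtain ⟨r, hr, hre⟩ := Finset.exists_mem_eq_sup' hne (fun r => monoFun r a)
  have hga : g a = monoFun r a := hre
  have hfa : polyFun S hS a = monoFun p a := by
    apply le_antisymm
    · apply Finset.sup'_le
      intro b hb
      rcases eq_or_ne b p with rfl | hbp
      · exact le_refl _
      · calc monoFun b a ≤ g a := Finset.le_sup' (fun r => monoFun r a)
              (Finset.mem_erase.mpr ⟨hbp, hb⟩)
          _ = monoFun p a := heq.symm
    · exact Finset.le_sup' (fun r => monoFun r a) hp
  refine ⟨a, p, hp, r, Finset.mem_of_mem_erase hr, (Finset.ne_of_mem_erase hr).symm,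
    hfa.symm, ?_⟩
  rw [← hga, ← heq, hfa]
end

section
/- Let K ⊆ ℕ be a finite nonempty set, let c : ℕ → ℝ, and define the univariate tropical polynomial function f(x) := max over k ∈ K of (c k + k * x) for x ∈ ℝ. Let a : Fin m → ℝ be injective (pairwise distinct real numbers) and suppose each a i is a corner root of f, i.e. there exist k₁ ≠ k₂ in K with c k₁ + k₁ * a i = c k₂ + k₂ * a i = f (a i). Then the product of the linear factors at the a i divides f: there exist a finite nonempty set K' ⊆ ℕ and c' : ℕ → ℝ such that for all x ∈ ℝ, f(x) = (max over k ∈ K' of (c' k + k * x)) + ∑ i, max (x, a i). -/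
/-- `b` is a (tangible) corner root of the max-plus polynomial with support `K`
and coefficients `c`: two distinct exponents attain the maximum at `b`. -/
def TRoot (K : Finset ℕ) (c : ℕ → ℝ) (b : ℝ) : Prop :=
  ∃ k₁ ∈ K, ∃ k₂ ∈ K, k₁ ≠ k₂ ∧ c k₁ + (k₁ : ℝ) * b = c k₂ + (k₂ : ℝ) * b ∧
    ∀ k ∈ K, c k + (k : ℝ) * b ≤ c k₁ + (k₁ : ℝ) * b

set_option maxHeartbeats 1000000 in
/-- Division of a max-plus polynomial function by the linear factor coming from a
corner root `a`; moreover every other corner root survives in the quotient. -/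
theorem div_step (K : Finset ℕ) (hK : K.Nonempty) (c : ℕ → ℝ) (a : ℝ)
    (hroot : TRoot K c a) :
    ∃ K' : Finset ℕ, ∃ hK' : K'.Nonempty, ∃ c' : ℕ → ℝ,
      (∀ x : ℝ, K.sup' hK (fun k => c k + (k : ℝ) * x)
        = K'.sup' hK' (fun k => c' k + (k : ℝ) * x) + max x a) ∧
      (∀ b : ℝ, b ≠ a → TRoot K c b → TRoot K' c' b) := by
  classical
  obtain ⟨m₁, hm₁, m₂, hm₂, hmne, hmeq, hub⟩ := hroot
  set p : ℝ := c m₁ + (m₁ : ℝ) * a with hp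
  set A : Finset ℕ := K.filter (fun k => c k + (k : ℝ) * a = p) with hA
  have hm₁A : m₁ ∈ A := by simp [hA, hm₁, hp]
  have hm₂A : m₂ ∈ A := by simp [hA, hm₂, hmeq.symm]
  have hAne : A.Nonempty := ⟨m₁, hm₁A⟩
  set k₁ : ℕ := A.min' hAne with hk₁def
  set k₂ : ℕ := A.max' hAne with hk₂def
  have hk₁A : k₁ ∈ A := A.min'_mem hAne
  have hk₂A : k₂ ∈ A := A.max'_mem hAne
  have hk₁K : k₁ ∈ K := (Finset.mem_filter.mp hk₁A).1
  have hk₂K : k₂ ∈ K := (Finset.mem_filter.mp hk₂A).1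
  have hk₁p : c k₁ + (k₁ : ℝ) * a = p := (Finset.mem_filter.mp hk₁A).2
  have hk₂p : c k₂ + (k₂ : ℝ) * a = p := (Finset.mem_filter.mp hk₂A).2
  have hk₁₂ : k₁ < k₂ := A.min'_lt_max' hm₁A hm₂A hmne
  have hk₂pos : 1 ≤ k₂ := by omega
  -- quotient support and coefficients
  set KL : Finset ℕ := K.filter (fun k => k ≤ k₁) with hKL
  set KR : Finset ℕ := (K.filter (fun k => k₂ ≤ k)).image (fun k => k - 1) with hKR
  set K' : Finset ℕ := KL ∪ KR with hK'def
  have hk₁KL : k₁ ∈ KL := by simp [hKL, hk₁K]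
  have hK' : K'.Nonempty := ⟨k₁, Finset.mem_union_left _ hk₁KL⟩
  set c' : ℕ → ℝ := fun j =>
    if j + 1 ∈ K ∧ k₂ ≤ j + 1 then
      (if j ∈ K ∧ j ≤ k₁ then max (c j - a) (c (j + 1)) else c (j + 1))
    else c j - a with hc'
  -- basic coefficient bounds
  have hcL : ∀ j ∈ KL, c j - a ≤ c' j := by
    intro j hj
    have hj' := Finset.mem_filter.mp hj
    have hcond : j ∈ K ∧ j ≤ k₁ := ⟨hj'.1, hj'.2⟩
    by_cases h : j + 1 ∈ K ∧ k₂ ≤ j + 1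
    · have he : c' j = max (c j - a) (c (j + 1)) := by
        simp only [hc']; rw [if_pos h, if_pos hcond]
      rw [he]; exact le_max_left _ _
    · have he : c' j = c j - a := by
        simp only [hc']; rw [if_neg h]
      rw [he]
  have hcR : ∀ j : ℕ, j + 1 ∈ K → k₂ ≤ j + 1 → c (j + 1) ≤ c' j := by
    intro j h1 h2
    have hcond : j + 1 ∈ K ∧ k₂ ≤ j + 1 := ⟨h1, h2⟩
    by_cases h3 : j ∈ K ∧ j ≤ k₁
    · have he : c' j = max (c j - a) (c (j + 1)) := by
        simp only [hc']; rw [if_pos hcond, if_pos h3]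
      rw [he]; exact le_max_right _ _
    · have he : c' j = c (j + 1) := by
        simp only [hc']; rw [if_pos hcond, if_neg h3]
      rw [he]
  -- generic term bound
  have hfsup_ge : ∀ (k : ℕ), k ∈ K → ∀ x : ℝ,
      c k + (k : ℝ) * x ≤ K.sup' hK (fun k => c k + (k : ℝ) * x) := by
    intro k hk x; exact Finset.le_sup' (fun k => c k + (k : ℝ) * x) hk
  have B1 : ∀ j ∈ K, j ≤ k₁ → ∀ x : ℝ,
      (c j - a) + (j : ℝ) * x + max x a ≤ K.sup' hK (fun k => c k + (k : ℝ) * x) := by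
    intro j hj hjk x
    rcases le_total x a with hx | hx
    · rw [max_eq_right hx]
      have := hfsup_ge j hj x
      linarith
    · rw [max_eq_left hx]
      have h2 := hfsup_ge k₂ hk₂K x
      have hub' := hub j hj
      have hj1 : ((j : ℝ) + 1) ≤ (k₂ : ℝ) := by
        have : j + 1 ≤ k₂ := Nat.succ_le_of_lt (lt_of_le_of_lt hjk hk₁₂)
        exact_mod_cast this
      have hprod : ((j : ℝ) + 1) * (x - a) ≤ (k₂ : ℝ) * (x - a) :=
        mul_le_mul_of_nonneg_right hj1 (by linarith)
      nlinarith [hprod]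
  have B2 : ∀ k ∈ K, k₂ ≤ k → ∀ x : ℝ,
      c k + ((k : ℝ) - 1) * x + max x a ≤ K.sup' hK (fun k => c k + (k : ℝ) * x) := by
    intro k hk hkk x
    rcases le_total x a with hx | hx
    · rw [max_eq_right hx]
      have h1 := hfsup_ge k₁ hk₁K x
      have hub' := hub k hk
      have hk1 : (k₁ : ℝ) ≤ (k : ℝ) - 1 := by
        have : k₁ + 1 ≤ k := Nat.succ_le_of_lt (lt_of_lt_of_le hk₁₂ hkk)
        have := (Nat.cast_le (α := ℝ)).mpr this
        push_cast at this; linarith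
      have hprod : ((k : ℝ) - 1) * (x - a) ≤ (k₁ : ℝ) * (x - a) :=
        mul_le_mul_of_nonpos_right hk1 (by linarith)
      nlinarith [hprod]
    · rw [max_eq_left hx]
      have := hfsup_ge k hk x
      linarith
  -- upper bound for all quotient terms
  have hUB : ∀ j ∈ K', ∀ x : ℝ,
      c' j + (j : ℝ) * x + max x a ≤ K.sup' hK (fun k => c k + (k : ℝ) * x) := by
    intro j hj x
    by_cases h : j + 1 ∈ K ∧ k₂ ≤ j + 1
    · have hB2 : c (j + 1) + (j : ℝ) * x + max x a
          ≤ K.sup' hK (fun k => c k + (k : ℝ) * x) := by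
        have := B2 (j + 1) h.1 h.2 x
        push_cast at this ⊢
        linarith
      by_cases h2 : j ∈ K ∧ j ≤ k₁
      · have hB1 := B1 j h2.1 h2.2 x
        have hc'j : c' j = max (c j - a) (c (j + 1)) := by
          simp only [hc']; rw [if_pos h, if_pos h2]
        rw [hc'j]
        rcases max_cases (c j - a) (c (j + 1)) with ⟨he, _⟩ | ⟨he, _⟩ <;> rw [he]
        · exact hB1
        · exact hB2
      · have hc'j : c' j = c (j + 1) := by
          simp only [hc']; rw [if_pos h, if_neg h2]
        rw [hc'j]
        exact hB2
    · -- then j ∈ KL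
      have hjKL : j ∈ KL := by
        rcases Finset.mem_union.mp hj with h1 | h1
        · exact h1
        · exfalso
          obtain ⟨k, hk, rfl⟩ := Finset.mem_image.mp h1
          have hk' := Finset.mem_filter.mp hk
          have h1k : 1 ≤ k := le_trans hk₂pos hk'.2
          have he : k - 1 + 1 = k := Nat.succ_pred_eq_of_pos h1k
          exact h ⟨by rw [he]; exact hk'.1, by rw [he]; exact hk'.2⟩
      have hj' := Finset.mem_filter.mp hjKL
      have hc'j : c' j = c j - a := by
        simp only [hc']; rw [if_neg h]
      rw [hc'j]
      exact B1 j hj'.1 hj'.2 x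
  -- attainment
  have hLB : ∀ x : ℝ, ∃ j ∈ K',
      K.sup' hK (fun k => c k + (k : ℝ) * x) ≤ c' j + (j : ℝ) * x + max x a := by
    intro x
    obtain ⟨k, hkK, hkeq0⟩ := Finset.exists_mem_eq_sup' hK (fun k => c k + (k : ℝ) * x)
    have hkeq : K.sup' hK (fun k => c k + (k : ℝ) * x) = c k + (k : ℝ) * x := hkeq0
    rcases le_total x a with hx | hx
    · -- left region: use an attaining exponent ≤ k₁
      rcases le_or_gt k k₁ with hkle | hkgt
      · have hkKL : k ∈ KL := by simp [hKL, hkK, hkle]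
        refine ⟨k, Finset.mem_union_left _ hkKL, ?_⟩
        have := hcL k hkKL
        rw [max_eq_right hx, hkeq]
        linarith
      · refine ⟨k₁, Finset.mem_union_left _ hk₁KL, ?_⟩
        have hcast : (k₁ : ℝ) ≤ (k : ℝ) := by exact_mod_cast hkgt.le
        have hprod : (k : ℝ) * (x - a) ≤ (k₁ : ℝ) * (x - a) :=
          mul_le_mul_of_nonpos_right hcast (by linarith)
        have hub' := hub k hkK
        have := hcL k₁ hk₁KL
        rw [max_eq_right hx, hkeq]
        nlinarith [hprod]
    · -- right region: use an attaining exponent ≥ k₂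
      rcases le_or_gt k₂ k with hkge | hklt
      · have h1k : 1 ≤ k := le_trans hk₂pos hkge
        have hsucc : k - 1 + 1 = k := Nat.succ_pred_eq_of_pos h1k
        refine ⟨k - 1, Finset.mem_union_right _
          (Finset.mem_image.mpr ⟨k, Finset.mem_filter.mpr ⟨hkK, hkge⟩, rfl⟩), ?_⟩
        have hR := hcR (k - 1) (by rw [hsucc]; exact hkK) (by rw [hsucc]; exact hkge)
        rw [hsucc] at hR
        have hcast : ((k - 1 : ℕ) : ℝ) = (k : ℝ) - 1 := by
          rw [Nat.cast_sub h1k]; norm_num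
        rw [max_eq_left hx, hkeq, hcast]
        linarith
      · have hsucc : k₂ - 1 + 1 = k₂ := Nat.succ_pred_eq_of_pos hk₂pos
        refine ⟨k₂ - 1, Finset.mem_union_right _
          (Finset.mem_image.mpr ⟨k₂, Finset.mem_filter.mpr ⟨hk₂K, le_refl _⟩, rfl⟩), ?_⟩
        have hR := hcR (k₂ - 1) (by rw [hsucc]; exact hk₂K) (by rw [hsucc])
        rw [hsucc] at hR
        have hcast : ((k₂ - 1 : ℕ) : ℝ) = (k₂ : ℝ) - 1 := by
          rw [Nat.cast_sub hk₂pos]; norm_num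
        have hcast2 : (k : ℝ) ≤ (k₂ : ℝ) := by exact_mod_cast hklt.le
        have hprod : (k : ℝ) * (x - a) ≤ (k₂ : ℝ) * (x - a) :=
          mul_le_mul_of_nonneg_right hcast2 (by linarith)
        have hub' := hub k hkK
        rw [max_eq_left hx, hkeq, hcast]
        nlinarith [hprod]
  -- the division identity
  have hdiv : ∀ x : ℝ, K.sup' hK (fun k => c k + (k : ℝ) * x)
      = K'.sup' hK' (fun k => c' k + (k : ℝ) * x) + max x a := by
    intro x
    apply le_antisymm
    · obtain ⟨j, hj, hle⟩ := hLB x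
      have h1 : c' j + (j : ℝ) * x ≤ K'.sup' hK' (fun k => c' k + (k : ℝ) * x) :=
        Finset.le_sup' (fun k => c' k + (k : ℝ) * x) hj
      linarith
    · have h1 : K'.sup' hK' (fun k => c' k + (k : ℝ) * x)
          ≤ K.sup' hK (fun k => c k + (k : ℝ) * x) - max x a := by
        apply Finset.sup'_le
        intro j hj
        have := hUB j hj x
        linarith
      linarith
  refine ⟨K', hK', c', hdiv, ?_⟩
  -- root preservation
  rintro b hba ⟨l₁, hl₁, l₂, hl₂, hlne, hleq, hubb⟩
  set q : ℝ := c l₁ + (l₁ : ℝ) * b with hq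
  have hfq : K.sup' hK (fun k => c k + (k : ℝ) * b) = q :=
    le_antisymm (Finset.sup'_le _ _ hubb) (Finset.le_sup' (fun k => c k + (k : ℝ) * b) hl₁)
  rcases lt_or_gt_of_ne hba with hb | hb
  · -- b < a : attaining exponents are ≤ k₁
    have hatt : ∀ l ∈ K, c l + (l : ℝ) * b = q → l ≤ k₁ := by
      intro l hl hleq'
      by_contra hgt
      push_neg at hgt
      have hcast : (k₁ : ℝ) < (l : ℝ) := by exact_mod_cast hgt
      have hprod : (l : ℝ) * (b - a) < (k₁ : ℝ) * (b - a) :=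
        mul_lt_mul_of_neg_right hcast (by linarith)
      have hub' := hub l hl
      have hubb' := hubb k₁ hk₁K
      nlinarith [hprod]
    have hl₁k : l₁ ≤ k₁ := hatt l₁ hl₁ rfl
    have hl₂k : l₂ ≤ k₁ := hatt l₂ hl₂ (by rw [← hleq])
    have hmax : max b a = a := max_eq_right hb.le
    have h2 := hdiv b
    rw [hmax, hfq] at h2
    have hval : ∀ l ∈ K, l ≤ k₁ → c l + (l : ℝ) * b = q →
        c' l + (l : ℝ) * b = q - a := by
      intro l hl hlk hleq'
      have hlKL : l ∈ KL := by simp [hKL, hl, hlk]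
      have hmem : l ∈ K' := Finset.mem_union_left _ hlKL
      have hge : q - a ≤ c' l + (l : ℝ) * b := by
        have := hcL l hlKL; linarith
      have hle : c' l + (l : ℝ) * b ≤ q - a := by
        have h1 : c' l + (l : ℝ) * b ≤ K'.sup' hK' (fun k => c' k + (k : ℝ) * b) :=
          Finset.le_sup' (fun k => c' k + (k : ℝ) * b) hmem
        linarith
      linarith
    refine ⟨l₁, Finset.mem_union_left _ (by simp [hKL, hl₁, hl₁k]),
      l₂, Finset.mem_union_left _ (by simp [hKL, hl₂, hl₂k]), hlne, ?_, ?_⟩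
    · rw [hval l₁ hl₁ hl₁k rfl, hval l₂ hl₂ hl₂k (by rw [← hleq])]
    · intro j hj
      rw [hval l₁ hl₁ hl₁k rfl]
      have h1 : c' j + (j : ℝ) * b ≤ K'.sup' hK' (fun k => c' k + (k : ℝ) * b) :=
        Finset.le_sup' (fun k => c' k + (k : ℝ) * b) hj
      linarith
  · -- b > a : attaining exponents are ≥ k₂
    have hatt : ∀ l ∈ K, c l + (l : ℝ) * b = q → k₂ ≤ l := by
      intro l hl hleq'
      by_contra hgt
      push_neg at hgt
      have hcast : (l : ℝ) < (k₂ : ℝ) := by exact_mod_cast hgt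
      have hprod : (l : ℝ) * (b - a) < (k₂ : ℝ) * (b - a) :=
        mul_lt_mul_of_pos_right hcast (by linarith)
      have hub' := hub l hl
      have hubb' := hubb k₂ hk₂K
      nlinarith [hprod]
    have hl₁k : k₂ ≤ l₁ := hatt l₁ hl₁ rfl
    have hl₂k : k₂ ≤ l₂ := hatt l₂ hl₂ (by rw [← hleq])
    have hmax : max b a = b := max_eq_left hb.le
    have h2 := hdiv b
    rw [hmax, hfq] at h2
    have hmem : ∀ l ∈ K, k₂ ≤ l → l - 1 ∈ K' := by
      intro l hl hlk
      exact Finset.mem_union_right _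
        (Finset.mem_image.mpr ⟨l, Finset.mem_filter.mpr ⟨hl, hlk⟩, rfl⟩)
    have hval : ∀ l ∈ K, k₂ ≤ l → c l + (l : ℝ) * b = q →
        c' (l - 1) + ((l - 1 : ℕ) : ℝ) * b = q - b := by
      intro l hl hlk hleq'
      have h1l : 1 ≤ l := le_trans hk₂pos hlk
      have hsucc : l - 1 + 1 = l := Nat.succ_pred_eq_of_pos h1l
      have hcast : ((l - 1 : ℕ) : ℝ) = (l : ℝ) - 1 := by
        rw [Nat.cast_sub h1l]; norm_num
      have hge : q - b ≤ c' (l - 1) + ((l - 1 : ℕ) : ℝ) * b := by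
        have := hcR (l - 1) (by rw [hsucc]; exact hl) (by rw [hsucc]; exact hlk)
        rw [hsucc] at this
        rw [hcast]
        nlinarith []
      have hle : c' (l - 1) + ((l - 1 : ℕ) : ℝ) * b ≤ q - b := by
        have h1 : c' (l - 1) + ((l - 1 : ℕ) : ℝ) * b
            ≤ K'.sup' hK' (fun k => c' k + (k : ℝ) * b) :=
          Finset.le_sup' (fun k => c' k + (k : ℝ) * b) (hmem l hl hlk)
        linarith
      linarith
    have hjne : l₁ - 1 ≠ l₂ - 1 := by
      have h1 : 1 ≤ l₁ := le_trans hk₂pos hl₁k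
      have h2' : 1 ≤ l₂ := le_trans hk₂pos hl₂k
      omega
    refine ⟨l₁ - 1, hmem l₁ hl₁ hl₁k, l₂ - 1, hmem l₂ hl₂ hl₂k, hjne, ?_, ?_⟩
    · rw [hval l₁ hl₁ hl₁k rfl, hval l₂ hl₂ hl₂k (by rw [← hleq])]
    · intro j hj
      rw [hval l₁ hl₁ hl₁k rfl]
      have h1 : c' j + (j : ℝ) * b ≤ K'.sup' hK' (fun k => c' k + (k : ℝ) * b) :=
        Finset.le_sup' (fun k => c' k + (k : ℝ) * b) hj
      linarith

/-- Iterated division: distinct corner roots divide out simultaneously. -/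
theorem main_ind (m : ℕ) : ∀ (K : Finset ℕ) (hK : K.Nonempty) (c : ℕ → ℝ)
    (a : Fin m → ℝ), Function.Injective a → (∀ i, TRoot K c (a i)) →
    ∃ K' : Finset ℕ, ∃ hK' : K'.Nonempty, ∃ c' : ℕ → ℝ, ∀ x : ℝ,
      K.sup' hK (fun k => c k + (k : ℝ) * x)
        = K'.sup' hK' (fun k => c' k + (k : ℝ) * x) + ∑ i, max x (a i) := by
  induction m with
  | zero => exact fun K hK c a _ _ => ⟨K, hK, c, fun x => by simp⟩
  | succ n ih =>
    intro K hK c a hinj hroots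
    obtain ⟨K₁, hK₁, c₁, hdiv, hpres⟩ := div_step K hK c (a 0) (hroots 0)
    obtain ⟨K', hK', c', hq⟩ := ih K₁ hK₁ c₁ (a ∘ Fin.succ)
      (hinj.comp (Fin.succ_injective n))
      (fun i => hpres _ (fun h => (Fin.succ_ne_zero i) (hinj h)) (hroots i.succ))
    refine ⟨K', hK', c', fun x => ?_⟩
    rw [hdiv x, hq x, Fin.sum_univ_succ]
    simp only [Function.comp]
    ring

/-- A univariate max-plus polynomial function with pairwise distinct corner roots
`a 0, …, a (m-1)` is divisible by the product of the linear factors `max (x, a i)`. -/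
theorem stmt13 {m : ℕ} (K : Finset ℕ) (hK : K.Nonempty) (c : ℕ → ℝ)
    (f : ℝ → ℝ) (hf : ∀ x : ℝ, f x = K.sup' hK (fun k => c k + (k : ℝ) * x))
    (a : Fin m → ℝ) (ha : Function.Injective a)
    (hroot : ∀ i : Fin m, ∃ k₁ ∈ K, ∃ k₂ ∈ K, k₁ ≠ k₂ ∧
      c k₁ + (k₁ : ℝ) * a i = f (a i) ∧ c k₂ + (k₂ : ℝ) * a i = f (a i)) :
    ∃ K' : Finset ℕ, ∃ hK' : K'.Nonempty, ∃ c' : ℕ → ℝ, ∀ x : ℝ,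
      f x = K'.sup' hK' (fun k => c' k + (k : ℝ) * x) + ∑ i, max x (a i) := by
  have hroots : ∀ i : Fin m, TRoot K c (a i) := by
    intro i
    obtain ⟨k₁, hk₁, k₂, hk₂, hne, he₁, he₂⟩ := hroot i
    refine ⟨k₁, hk₁, k₂, hk₂, hne, by rw [he₁, he₂], ?_⟩
    intro k hk
    rw [he₁, hf (a i)]
    exact Finset.le_sup' (fun k => c k + (k : ℝ) * a i) hk
  obtain ⟨K', hK', c', hfin⟩ := main_ind m K hK c a ha hroots
  exact ⟨K', hK', c', fun x => by rw [hf x, hfin x]⟩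
end

section
/- Let v : Fin n → ℤ be nonzero and α ∈ ℝ, and let B : ℝⁿ → ℝ be the tropical binomial function B(x) := max (∑ i, (v i : ℝ) * x i, α). Call a function g : ℝⁿ → ℝ a tropical Laurent polynomial function if g(x) = max over (c, w) in some finite nonempty set of pairs in ℝ × (Fin n → ℤ) of (c + ∑ i, (w i : ℝ) * x i). Then there exist tropical Laurent polynomial functions g and h, neither of which is an affine function, with B(x) = g(x) + h(x) for all x ∈ ℝⁿ, if and only if the greatest common divisor of the integers v 0, …, v (n−1) is greater than 1. Equivalently, the binomial λ₁^{i₁}⋯λₙ^{iₙ} + α is irreducible exactly when i₁, …, iₙ are relatively prime. -/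
/-- A tropical Laurent polynomial function in logarithmic max-plus notation: a finite
maximum of affine functions with integer slopes. -/
def IsLaurentPolyFun {n : ℕ} (g : (Fin n → ℝ) → ℝ) : Prop :=
  ∃ S : Finset (ℝ × (Fin n → ℤ)), ∃ hS : S.Nonempty,
    ∀ x : Fin n → ℝ, g x = S.sup' hS (fun p => p.1 + ∑ i, (p.2 i : ℝ) * x i)

/-- An affine function, corresponding to a single monomial. -/
def IsAffineFun {n : ℕ} (g : (Fin n → ℝ) → ℝ) : Prop :=
  ∃ c : ℝ, ∃ w : Fin n → ℝ, ∀ x : Fin n → ℝ, g x = c + ∑ i, w i * x i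

/-- A "binomial" `max ⟨m,x⟩ β` with `m ≠ 0` is not affine. -/
lemma not_affine_max {n : ℕ} (m : Fin n → ℤ) (hm : m ≠ 0) (β : ℝ) :
    ¬ IsAffineFun (fun x : Fin n → ℝ => max (∑ i, (m i : ℝ) * x i) β) := by
  rintro ⟨c, w, hcw⟩
  set N : ℝ := ∑ i, (m i : ℝ) * (m i : ℝ) with hN
  have hNpos : 0 < N := by
    obtain ⟨i0, hi0⟩ : ∃ i, m i ≠ 0 := by
      by_contra h; push_neg at h; exact hm (funext h)
    refine Finset.sum_pos' (fun i _ => mul_self_nonneg _) ⟨i0, Finset.mem_univ _, ?_⟩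
    exact mul_self_pos.mpr (Int.cast_ne_zero.mpr hi0)
  set W : ℝ := ∑ i, w i * (m i : ℝ) with hW
  have key : ∀ t : ℝ, max (t * N) β = c + t * W := by
    intro t
    have h1 : ∑ i, (m i : ℝ) * (t * (m i : ℝ)) = t * N := by
      rw [hN, Finset.mul_sum]; exact Finset.sum_congr rfl (fun i _ => by ring)
    have h2 : ∑ i, w i * (t * (m i : ℝ)) = t * W := by
      rw [hW, Finset.mul_sum]; exact Finset.sum_congr rfl (fun i _ => by ring)
    have := hcw (fun i => t * (m i : ℝ))
    simp only at this
    rw [h1, h2] at this; exact this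
  set T : ℝ := (|β| + 1) / N with hTdef
  have hTN : T * N = |β| + 1 := div_mul_cancel₀ _ (ne_of_gt hNpos)
  have habs1 : β ≤ |β| := le_abs_self β
  have habs2 : -|β| ≤ β := neg_abs_le β
  have e2 : (T + 1) * N = |β| + 1 + N := by rw [add_mul, hTN, one_mul]
  have e3 : -T * N = -(|β| + 1) := by rw [neg_mul, hTN]
  have e4 : -(T + 1) * N = -(|β| + 1 + N) := by rw [neg_mul, e2]
  have k1 := key T
  have k2 := key (T + 1)
  have k3 := key (-T)
  have k4 := key (-(T + 1))
  rw [max_eq_left (by linarith)] at k1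
  rw [max_eq_left (by linarith)] at k2
  rw [max_eq_right (by linarith)] at k3
  rw [max_eq_right (by linarith)] at k4
  have r1 : (T + 1) * W = T * W + W := by ring
  have r2 : -T * W = -(T * W) := by ring
  have r3 : -(T + 1) * W = -(T * W) - W := by ring
  have hW0 : W = 0 := by rw [r2] at k3; rw [r3] at k4; linarith
  rw [r1] at k2
  rw [hW0] at k1 k2
  linarith

set_option maxHeartbeats 1600000 in
/-- The tropical binomial `λ^v + α` factors as a product (pointwise sum) of two
non-monomial Laurent polynomial functions iff `gcd (v 0, …, v (n-1)) > 1`;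
equivalently, it is irreducible exactly when the exponents are relatively prime. -/
theorem stmt14 {n : ℕ} (v : Fin n → ℤ) (hv : v ≠ 0) (α : ℝ) :
    (∃ g h : (Fin n → ℝ) → ℝ, IsLaurentPolyFun g ∧ IsLaurentPolyFun h ∧
        ¬ IsAffineFun g ∧ ¬ IsAffineFun h ∧
        ∀ x : Fin n → ℝ, max (∑ i, (v i : ℝ) * x i) α = g x + h x) ↔
      1 < Finset.univ.gcd v := by
  classical
  obtain ⟨i0, hi0⟩ : ∃ i, v i ≠ 0 := by
    by_contra h; push_neg at h; exact hv (funext h)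
  set d : ℤ := Finset.univ.gcd v with hdDef
  have hd_nonneg : 0 ≤ d := by
    have h1 : |d| = d := by rw [Int.abs_eq_normalize]; exact Finset.normalize_gcd
    exact abs_eq_self.mp h1
  have hd_ne : d ≠ 0 := by
    intro h0
    exact hi0 (Finset.gcd_eq_zero_iff.mp h0 i0 (Finset.mem_univ _))
  have hd_pos : 0 < d := lt_of_le_of_ne hd_nonneg (Ne.symm hd_ne)
  set N : ℤ := ∑ i, v i * v i with hNdef
  have hNpos : 0 < N := by
    exact Finset.sum_pos' (fun i _ => mul_self_nonneg _)
      ⟨i0, Finset.mem_univ _, mul_self_pos.mpr hi0⟩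
  constructor
  · rintro ⟨g, h, ⟨S, hS, hg⟩, ⟨T, hT, hh⟩, hga, hha, heq⟩
    -- support function identity
    have supp : ∀ y : Fin n → ℝ,
        S.sup' hS (fun p => ∑ i, (p.2 i : ℝ) * y i)
          + T.sup' hT (fun p => ∑ i, (p.2 i : ℝ) * y i)
          = max (∑ i, (v i : ℝ) * y i) 0 := by
      intro y
      set FS := S.sup' hS (fun p => ∑ i, (p.2 i : ℝ) * y i) with hFS
      set FT := T.sup' hT (fun p => ∑ i, (p.2 i : ℝ) * y i) with hFT
      set CS := S.sup' hS (fun p => |p.1|) with hCS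
      set CT := T.sup' hT (fun p => |p.1|) with hCT
      have hCSnn : 0 ≤ CS := by
        obtain ⟨p0, hp0⟩ := id hS
        exact le_trans (abs_nonneg p0.1) (Finset.le_sup' (fun p => |p.1|) hp0)
      have hCTnn : 0 ≤ CT := by
        obtain ⟨p0, hp0⟩ := id hT
        exact le_trans (abs_nonneg p0.1) (Finset.le_sup' (fun p => |p.1|) hp0)
      set Sv : ℝ := ∑ i, (v i : ℝ) * y i with hSv
      set M : ℝ := max Sv 0 with hM
      -- generic bound for one factor
      have genb : ∀ (U : Finset (ℝ × (Fin n → ℤ))) (hU : U.Nonempty)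
          (u : (Fin n → ℝ) → ℝ),
          (∀ x, u x = U.sup' hU (fun p => p.1 + ∑ i, (p.2 i : ℝ) * x i)) →
          ∀ t : ℝ, 0 < t →
            t * (U.sup' hU (fun p => ∑ i, (p.2 i : ℝ) * y i)) - U.sup' hU (fun p => |p.1|)
              ≤ u (fun i => t * y i) ∧
            u (fun i => t * y i)
              ≤ U.sup' hU (fun p => |p.1|)
                + t * (U.sup' hU (fun p => ∑ i, (p.2 i : ℝ) * y i)) := by
        intro U hU u hu t ht
        set FU := U.sup' hU (fun p => ∑ i, (p.2 i : ℝ) * y i) with hFU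
        set CU := U.sup' hU (fun p => |p.1|) with hCU
        have hval : u (fun i => t * y i)
            = U.sup' hU (fun p => p.1 + t * ∑ i, (p.2 i : ℝ) * y i) := by
          rw [hu (fun i => t * y i)]
          refine Finset.sup'_congr hU rfl (fun p _ => ?_)
          congr 1
          rw [Finset.mul_sum]; exact Finset.sum_congr rfl (fun i _ => by ring)
        constructor
        · obtain ⟨p0, hp0, hp0e⟩ := Finset.exists_mem_eq_sup' hU
            (fun p => ∑ i, (p.2 i : ℝ) * y i)
          rw [hval]
          have h1 : -CU ≤ p0.1 := le_trans (neg_le_neg (Finset.le_sup' _ hp0)) (neg_abs_le _)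
          have h2 : p0.1 + t * ∑ i, (p0.2 i : ℝ) * y i
              ≤ U.sup' hU (fun p => p.1 + t * ∑ i, (p.2 i : ℝ) * y i) :=
            Finset.le_sup' (fun p => p.1 + t * ∑ i, (p.2 i : ℝ) * y i) hp0
          rw [← hFU] at hp0e
          rw [hp0e]; linarith
        · rw [hval]
          refine Finset.sup'_le hU _ (fun p hp => ?_)
          have h1 : p.1 ≤ CU :=
            le_trans (le_abs_self _) (Finset.le_sup' (fun p => |p.1|) hp)
          have h2 : t * ∑ i, (p.2 i : ℝ) * y i ≤ t * FU :=
            mul_le_mul_of_nonneg_left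
              (Finset.le_sup' (fun p => ∑ i, (p.2 i : ℝ) * y i) hp) (le_of_lt ht)
          linarith
      -- the binomial along the ray
      have binb : ∀ t : ℝ, 0 < t →
          |g (fun i => t * y i) + h (fun i => t * y i) - t * M| ≤ |α| := by
        intro t ht
        have hB := heq (fun i => t * y i)
        have h1 : ∑ i, (v i : ℝ) * (t * y i) = t * Sv := by
          rw [hSv, Finset.mul_sum]; exact Finset.sum_congr rfl (fun i _ => by ring)
        rw [h1] at hB
        have h2 : t * M = max (t * Sv) 0 := by
          rw [hM, mul_max_of_nonneg _ _ (le_of_lt ht), mul_zero]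
        rw [← hB, h2]
        calc |max (t * Sv) α - max (t * Sv) 0| ≤ |α - 0| := by
              rw [max_comm (t*Sv) α, max_comm (t*Sv) 0]
              exact abs_max_sub_max_le_abs _ _ _
          _ = |α| := by rw [sub_zero]
      have final : ∀ t : ℝ, 0 < t →
          t * (FS + FT) - (CS + CT) ≤ t * M + |α| ∧
          t * M - |α| ≤ t * (FS + FT) + (CS + CT) := by
        intro t ht
        obtain ⟨g1, g2⟩ := genb S hS g hg t ht
        obtain ⟨h1, h2⟩ := genb T hT h hh t ht
        have hb := binb t ht
        rw [abs_le] at hb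
        constructor <;> [skip; skip] <;> nlinarith [hb.1, hb.2]
      rcases lt_trichotomy (FS + FT) M with hlt | he | hgt
      · exfalso
        set t := (CS + CT + |α| + 1) / (M - (FS + FT)) with htdef
        have hden : 0 < M - (FS + FT) := by linarith
        have ht : 0 < t := by positivity
        have htm : t * (M - (FS + FT)) = CS + CT + |α| + 1 :=
          div_mul_cancel₀ _ (ne_of_gt hden)
        obtain ⟨f1, f2⟩ := final t ht
        nlinarith
      · exact he
      · exfalso
        set t := (CS + CT + |α| + 1) / ((FS + FT) - M) with htdef
        have hden : 0 < (FS + FT) - M := by linarith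
        have ht : 0 < t := by positivity
        have htm : t * ((FS + FT) - M) = CS + CT + |α| + 1 :=
          div_mul_cancel₀ _ (ne_of_gt hden)
        obtain ⟨f1, f2⟩ := final t ht
        nlinarith
    -- parallelism of exponent differences, for any factor's support identity
    have main : ∀ (U W : Finset (ℝ × (Fin n → ℤ))) (hU : U.Nonempty) (hW : W.Nonempty),
        (∀ y : Fin n → ℝ,
          U.sup' hU (fun p => ∑ i, (p.2 i : ℝ) * y i)
            + W.sup' hW (fun p => ∑ i, (p.2 i : ℝ) * y i)
            = max (∑ i, (v i : ℝ) * y i) 0) →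
        ∀ p ∈ U, ∀ q ∈ U, ∀ j : Fin n,
          v i0 * (p.2 j - q.2 j) = (p.2 i0 - q.2 i0) * v j := by
      intro U W hU hW hsupp p hp q hq j
      set y : Fin n → ℝ := fun i =>
        (if i = j then (v i0 : ℝ) else 0) - (if i = i0 then (v j : ℝ) else 0) with hy
      have evalL : ∀ w : Fin n → ℤ,
          ∑ i, (w i : ℝ) * y i = (v i0 : ℝ) * (w j : ℝ) - (v j : ℝ) * (w i0 : ℝ) := by
        intro w
        simp only [hy]
        simp [mul_sub, Finset.sum_sub_distrib, mul_ite, mul_zero, Finset.sum_ite_eq',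
          mul_comm]
      have hvy : ∑ i, (v i : ℝ) * y i = 0 := by rw [evalL]; ring
      have hvy' : ∑ i, (v i : ℝ) * (-y i) = 0 := by
        rw [show ∑ i, (v i : ℝ) * (-y i) = -∑ i, (v i : ℝ) * y i by
          rw [← Finset.sum_neg_distrib]; exact Finset.sum_congr rfl fun i _ => by ring]
        rw [hvy]; ring
      have hnegL : ∀ (V : Finset (ℝ × (Fin n → ℤ))) (w : Fin n → ℤ),
          ∑ i, (w i : ℝ) * (-y i) = -∑ i, (w i : ℝ) * y i := by
        intro V w
        rw [← Finset.sum_neg_distrib]; exact Finset.sum_congr rfl fun i _ => by ring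
      have e1 := hsupp y
      have e2 := hsupp (fun i => -y i)
      rw [hvy, max_self] at e1
      rw [hvy', max_self] at e2
      -- nonnegativity of each "width"
      obtain ⟨pU, hpU⟩ := id hU
      obtain ⟨pW, hpW⟩ := id hW
      have wU : 0 ≤ U.sup' hU (fun p => ∑ i, (p.2 i : ℝ) * y i)
          + U.sup' hU (fun p => ∑ i, (p.2 i : ℝ) * (-y i)) := by
        have l1 : ∑ i, (pU.2 i : ℝ) * y i ≤ _ := Finset.le_sup' (fun p => ∑ i, (p.2 i : ℝ) * y i) hpU
        have l2 : ∑ i, (pU.2 i : ℝ) * (-y i) ≤ _ := Finset.le_sup' (fun p => ∑ i, (p.2 i : ℝ) * (-y i)) hpU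
        have := hnegL U pU.2
        linarith
      have wW : 0 ≤ W.sup' hW (fun p => ∑ i, (p.2 i : ℝ) * y i)
          + W.sup' hW (fun p => ∑ i, (p.2 i : ℝ) * (-y i)) := by
        have l1 : ∑ i, (pW.2 i : ℝ) * y i ≤ _ := Finset.le_sup' (fun p => ∑ i, (p.2 i : ℝ) * y i) hpW
        have l2 : ∑ i, (pW.2 i : ℝ) * (-y i) ≤ _ := Finset.le_sup' (fun p => ∑ i, (p.2 i : ℝ) * (-y i)) hpW
        have := hnegL W pW.2
        linarith
      have zU : U.sup' hU (fun p => ∑ i, (p.2 i : ℝ) * y i)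
          + U.sup' hU (fun p => ∑ i, (p.2 i : ℝ) * (-y i)) = 0 := by linarith
      -- both directions
      have d1 : ∑ i, (p.2 i : ℝ) * y i - ∑ i, (q.2 i : ℝ) * y i ≤ 0 := by
        have l1 : ∑ i, (p.2 i : ℝ) * y i ≤ _ := Finset.le_sup' (fun p => ∑ i, (p.2 i : ℝ) * y i) hp
        have l2 : ∑ i, (q.2 i : ℝ) * (-y i) ≤ _ := Finset.le_sup' (fun p => ∑ i, (p.2 i : ℝ) * (-y i)) hq
        have := hnegL U q.2
        linarith
      have d2 : ∑ i, (q.2 i : ℝ) * y i - ∑ i, (p.2 i : ℝ) * y i ≤ 0 := by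
        have l1 : ∑ i, (q.2 i : ℝ) * y i ≤ _ := Finset.le_sup' (fun p => ∑ i, (p.2 i : ℝ) * y i) hq
        have l2 : ∑ i, (p.2 i : ℝ) * (-y i) ≤ _ := Finset.le_sup' (fun p => ∑ i, (p.2 i : ℝ) * (-y i)) hp
        have := hnegL U p.2
        linarith
      have deq : ∑ i, (p.2 i : ℝ) * y i = ∑ i, (q.2 i : ℝ) * y i := le_antisymm (by linarith) (by linarith)
      rw [evalL p.2, evalL q.2] at deq
      have hZ : ((v i0 * p.2 j - v j * p.2 i0 : ℤ) : ℝ) = ((v i0 * q.2 j - v j * q.2 i0 : ℤ) : ℝ) := by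
        push_cast; linarith
      have hZ' : v i0 * p.2 j - v j * p.2 i0 = v i0 * q.2 j - v j * q.2 i0 := by
        exact_mod_cast hZ
      linear_combination hZ'
    have parS := main S T hS hT supp
    have parT := main T S hT hS (fun y => by rw [← supp y]; ring)
    -- package the data for one factor
    set yv : Fin n → ℝ := fun i => (v i : ℝ) with hyv
    have hyvsum : ∑ i, (v i : ℝ) * yv i = (N : ℝ) := by
      rw [hNdef]; push_cast; rfl
    have hyvsum' : ∑ i, (v i : ℝ) * (-yv i) = -(N : ℝ) := by
      rw [← hyvsum, ← Finset.sum_neg_distrib]; exact Finset.sum_congr rfl fun i _ => by ring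
    have pack : ∀ (U : Finset (ℝ × (Fin n → ℤ))) (hU : U.Nonempty)
        (u : (Fin n → ℝ) → ℝ),
        (∀ x, u x = U.sup' hU (fun p => p.1 + ∑ i, (p.2 i : ℝ) * x i)) →
        ¬ IsAffineFun u →
        (∀ p ∈ U, ∀ q ∈ U, ∀ j : Fin n,
          v i0 * (p.2 j - q.2 j) = (p.2 i0 - q.2 i0) * v j) →
        ∃ ap am k : ℤ,
          U.sup' hU (fun p => ∑ i, (p.2 i : ℝ) * yv i) = (ap : ℝ) ∧
          U.sup' hU (fun p => ∑ i, (p.2 i : ℝ) * (-yv i)) = (am : ℝ) ∧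
          v i0 * (ap + am) = k * N ∧
          0 < ap + am ∧
          v i0 ∣ k * d := by
      intro U hU u hu hua hpar
      obtain ⟨pp, hpp, hppE⟩ := Finset.exists_mem_eq_sup' hU (fun p => ∑ i, (p.2 i : ℝ) * yv i)
      obtain ⟨pm, hpm, hpmE⟩ := Finset.exists_mem_eq_sup' hU (fun p => ∑ i, (p.2 i : ℝ) * (-yv i))
      set ap : ℤ := ∑ i, pp.2 i * v i with hap
      set am : ℤ := -∑ i, pm.2 i * v i with ham
      have castp : ∀ w : Fin n → ℤ, ∑ i, (w i : ℝ) * yv i = ((∑ i, w i * v i : ℤ) : ℝ) := by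
        intro w; push_cast; rfl
      have castm : ∀ w : Fin n → ℤ, ∑ i, (w i : ℝ) * (-yv i) = -((∑ i, w i * v i : ℤ) : ℝ) := by
        intro w; push_cast [← Finset.sum_neg_distrib]
        exact Finset.sum_congr rfl fun i _ => by ring
      refine ⟨ap, am, pp.2 i0 - pm.2 i0, ?_, ?_, ?_, ?_, ?_⟩
      · rw [hppE, castp]
      · rw [hpmE, castm, ham]; push_cast; ring
      · -- sum the parallel relation against v
        have e0 : ap + am = ∑ i, (pp.2 i - pm.2 i) * v i := by
          rw [hap, ham,
            show ∑ i, (pp.2 i - pm.2 i) * v i = ∑ i, (pp.2 i * v i - pm.2 i * v i) from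
              Finset.sum_congr rfl fun i _ => by ring,
            Finset.sum_sub_distrib]
          ring
        calc v i0 * (ap + am) = ∑ j, v i0 * ((pp.2 j - pm.2 j) * v j) := by
              rw [e0, Finset.mul_sum]
          _ = ∑ j, (pp.2 i0 - pm.2 i0) * v j * v j := Finset.sum_congr rfl fun j _ => by
              have := hpar pp hpp pm hpm j
              linear_combination v j * this
          _ = (pp.2 i0 - pm.2 i0) * N := by
              rw [hNdef, Finset.mul_sum]
              exact Finset.sum_congr rfl fun j _ => by ring
      · -- positivity of the width from non-affineness
        obtain ⟨p1, hp1, q1, hq1, hne⟩ :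
            ∃ p ∈ U, ∃ q ∈ U, p.2 ≠ q.2 := by
          by_contra hcon
          push_neg at hcon
          obtain ⟨p0, hp0⟩ := id hU
          apply hua
          refine ⟨U.sup' hU (fun p => p.1), fun i => (p0.2 i : ℝ), fun x => ?_⟩
          rw [hu x]
          apply le_antisymm
          · refine Finset.sup'_le hU _ (fun p hp => ?_)
            have := hcon p hp p0 hp0
            rw [this]
            have : p.1 ≤ U.sup' hU (fun p => p.1) :=
              Finset.le_sup' (fun p : ℝ × (Fin n → ℤ) => p.1) hp
            linarith
          · obtain ⟨pc, hpc, hpcE⟩ := Finset.exists_mem_eq_sup' hU (fun p : ℝ × (Fin n → ℤ) => p.1)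
            have h2 := hcon pc hpc p0 hp0
            have h3 : pc.1 + ∑ i, (pc.2 i : ℝ) * x i ≤ _ := Finset.le_sup'
              (fun p => p.1 + ∑ i, (p.2 i : ℝ) * x i) hpc
            rw [hpcE, ← h2]
            exact h3
        obtain ⟨j1, hj1⟩ : ∃ j, p1.2 j ≠ q1.2 j := by
          by_contra hcc; push_neg at hcc; exact hne (funext hcc)
        set k' : ℤ := p1.2 i0 - q1.2 i0 with hk'
        have hk'0 : k' ≠ 0 := by
          intro h0
          have := hpar p1 hp1 q1 hq1 j1
          rw [← hk', h0, zero_mul] at this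
          have : p1.2 j1 - q1.2 j1 = 0 := by
            rcases mul_eq_zero.mp this with h | h
            · exact absurd h hi0
            · exact h
          omega
        have hsum1 : v i0 * ((∑ i, p1.2 i * v i) - (∑ i, q1.2 i * v i)) = k' * N := by
          rw [← Finset.sum_sub_distrib, Finset.mul_sum, hNdef, Finset.mul_sum]
          refine Finset.sum_congr rfl fun j _ => ?_
          have := hpar p1 hp1 q1 hq1 j
          rw [← hk'] at this
          linear_combination v j * this
        have hne2 : (∑ i, p1.2 i * v i) ≠ (∑ i, q1.2 i * v i) := by
          intro hcc
          rw [hcc, sub_self, mul_zero] at hsum1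
          exact hk'0 (by
            rcases mul_eq_zero.mp hsum1.symm with h | h
            · exact h
            · exact absurd h (ne_of_gt hNpos))
        -- ap ≥ both, am ≥ -both
        have g1 : ((∑ i, p1.2 i * v i : ℤ) : ℝ) ≤ (ap : ℝ) := by
          have l := Finset.le_sup' (fun p => ∑ i, (p.2 i : ℝ) * yv i) hp1
          rw [hppE, castp p1.2, castp pp.2] at l
          rw [hap]; exact l
        have g2 : ((∑ i, q1.2 i * v i : ℤ) : ℝ) ≤ (ap : ℝ) := by
          have l := Finset.le_sup' (fun p => ∑ i, (p.2 i : ℝ) * yv i) hq1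
          rw [hppE, castp q1.2, castp pp.2] at l
          rw [hap]; exact l
        have g3 : -((∑ i, p1.2 i * v i : ℤ) : ℝ) ≤ (am : ℝ) := by
          have l := Finset.le_sup' (fun p => ∑ i, (p.2 i : ℝ) * (-yv i)) hp1
          rw [hpmE, castm p1.2, castm pm.2] at l
          rw [ham]; push_cast at l ⊢; linarith
        have g4 : -((∑ i, q1.2 i * v i : ℤ) : ℝ) ≤ (am : ℝ) := by
          have l := Finset.le_sup' (fun p => ∑ i, (p.2 i : ℝ) * (-yv i)) hq1
          rw [hpmE, castm q1.2, castm pm.2] at l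
          rw [ham]; push_cast at l ⊢; linarith
        have g1' : (∑ i, p1.2 i * v i) ≤ ap := by exact_mod_cast g1
        have g2' : (∑ i, q1.2 i * v i) ≤ ap := by exact_mod_cast g2
        have g3' : -(∑ i, p1.2 i * v i) ≤ am := by exact_mod_cast g3
        have g4' : -(∑ i, q1.2 i * v i) ≤ am := by exact_mod_cast g4
        omega
      · -- divisibility
        have hdvd : ∀ j : Fin n, v i0 ∣ (pp.2 i0 - pm.2 i0) * v j := by
          intro j
          exact ⟨pp.2 j - pm.2 j, by rw [← hpar pp hpp pm hpm j]⟩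
        have h1 : v i0 ∣ Finset.univ.gcd (fun j => (pp.2 i0 - pm.2 i0) * v j) :=
          Finset.dvd_gcd (fun j _ => hdvd j)
        rw [Finset.gcd_mul_left] at h1
        rw [← Int.abs_eq_normalize] at h1
        have h2 : |pp.2 i0 - pm.2 i0| * d = |(pp.2 i0 - pm.2 i0) * d| := by
          rw [abs_mul, abs_of_nonneg hd_nonneg]
        rw [← hdDef] at h1
        rw [h2] at h1
        exact (dvd_abs _ _).mp h1
    obtain ⟨apS, amS, kS, hS1, hS2, hS3, hS4, hS5⟩ := pack S hS g hg hga parS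
    obtain ⟨apT, amT, kT, hT1, hT2, hT3, hT4, hT5⟩ := pack T hT h hh hha parT
    -- joint relations from the support identity at ±v
    have j1 := supp yv
    have j2 := supp (fun i => -yv i)
    rw [hyvsum] at j1
    rw [hyvsum'] at j2
    rw [max_eq_left (by positivity)] at j1
    rw [max_eq_right (by simp; positivity)] at j2
    rw [hS1, hT1] at j1
    rw [hS2, hT2] at j2
    have j1' : apS + apT = N := by exact_mod_cast j1
    have j2' : amS + amT = 0 := by exact_mod_cast j2
    -- final integer arithmetic
    obtain ⟨mS, hmS⟩ := hS5
    obtain ⟨mT, hmT⟩ := hT5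
    have hsum : v i0 * N = (kS + kT) * N := by
      have : v i0 * ((apS + amS) + (apT + amT)) = (kS + kT) * N := by
        rw [mul_add, hS3, hT3]; ring
      rw [show (apS + amS) + (apT + amT) = N by omega] at this
      exact this
    have hks : v i0 = kS + kT := mul_right_cancel₀ (ne_of_gt hNpos) hsum
    have hmsum : d = mS + mT := by
      have h1 : (kS + kT) * d = v i0 * (mS + mT) := by
        rw [add_mul, hmS, hmT]; ring
      rw [← hks] at h1
      exact mul_left_cancel₀ hi0 h1
    have hvsq : 0 < v i0 * v i0 := mul_self_pos.mpr hi0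
    have hkSpos : 0 < kS * v i0 := by
      have e : (kS * v i0) * N = (v i0 * v i0) * (apS + amS) := by
        linear_combination (-(v i0)) * hS3
      nlinarith [e, hvsq, hS4, hNpos]
    have hkTpos : 0 < kT * v i0 := by
      have e : (kT * v i0) * N = (v i0 * v i0) * (apT + amT) := by
        linear_combination (-(v i0)) * hT3
      nlinarith [e, hvsq, hT4, hNpos]
    have hmSpos : 0 < mS := by
      have e : (kS * v i0) * d = (v i0 * v i0) * mS := by linear_combination v i0 * hmS
      nlinarith [e, hkSpos, hd_pos, hvsq]
    have hmTpos : 0 < mT := by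
      have e : (kT * v i0) * d = (v i0 * v i0) * mT := by linear_combination v i0 * hmT
      nlinarith [e, hkTpos, hd_pos, hvsq]
    omega
  · -- reverse direction: construct the factorization
    intro hd1
    set u : Fin n → ℤ := fun i => v i / d with hu
    have hvu : ∀ i, v i = d * u i := fun i =>
      (Int.mul_ediv_cancel' (Finset.gcd_dvd (Finset.mem_univ i))).symm
    have hu0 : u ≠ 0 := by
      intro h0
      apply hv
      funext i
      rw [hvu i, congrFun h0 i]; simp
    set w2 : Fin n → ℤ := fun i => (d - 1) * u i with hw2
    have hw20 : w2 ≠ 0 := by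
      intro h0
      apply hu0
      funext i
      have := congrFun h0 i
      simp only [hw2, Pi.zero_apply] at this ⊢
      rcases mul_eq_zero.mp this with h | h
      · omega
      · exact h
    set D : ℝ := (d : ℝ) with hD
    have hDpos : 0 < D := by rw [hD]; exact_mod_cast hd_pos
    have hD1 : 1 < D := by rw [hD]; exact_mod_cast hd1
    set β : ℝ := α / D with hβ
    refine ⟨fun x => max (∑ i, (u i : ℝ) * x i) β,
            fun x => max (∑ i, (w2 i : ℝ) * x i) ((D - 1) * β),
            ?_, ?_, not_affine_max u hu0 β, not_affine_max w2 hw20 _, ?_⟩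
    · refine ⟨{((0 : ℝ), u), (β, (0 : Fin n → ℤ))}, by simp, fun x => ?_⟩
      have : ∀ (hh : (insert ((0:ℝ), u) ({(β, (0 : Fin n → ℤ))} : Finset _)).Nonempty),
          (insert ((0:ℝ), u) ({(β, (0 : Fin n → ℤ))} : Finset _)).sup' hh
            (fun p => p.1 + ∑ i, (p.2 i : ℝ) * x i)
          = max ((0:ℝ) + ∑ i, (u i : ℝ) * x i) (β + ∑ i, ((0:ℤ) : ℝ) * x i) := by
        intro hh
        rw [Finset.sup'_insert (Finset.singleton_nonempty _), Finset.sup'_singleton]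
        rfl
      rw [this _]
      simp
    · refine ⟨{((0 : ℝ), w2), ((D - 1) * β, (0 : Fin n → ℤ))}, by simp, fun x => ?_⟩
      have : ∀ (hh : (insert ((0:ℝ), w2) ({((D-1)*β, (0 : Fin n → ℤ))} : Finset _)).Nonempty),
          (insert ((0:ℝ), w2) ({((D-1)*β, (0 : Fin n → ℤ))} : Finset _)).sup' hh
            (fun p => p.1 + ∑ i, (p.2 i : ℝ) * x i)
          = max ((0:ℝ) + ∑ i, (w2 i : ℝ) * x i) ((D-1)*β + ∑ i, ((0:ℤ) : ℝ) * x i) := by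
        intro hh
        rw [Finset.sup'_insert (Finset.singleton_nonempty _), Finset.sup'_singleton]
        rfl
      rw [this _]
      simp
    · intro x
      show max (∑ i, (v i : ℝ) * x i) α
        = max (∑ i, (u i : ℝ) * x i) β + max (∑ i, (w2 i : ℝ) * x i) ((D - 1) * β)
      set s : ℝ := ∑ i, (u i : ℝ) * x i with hs
      have hv_eq : ∑ i, (v i : ℝ) * x i = D * s := by
        rw [hs, Finset.mul_sum]
        refine Finset.sum_congr rfl fun i _ => ?_
        rw [hvu i]; push_cast; ring
      have hw2_eq : ∑ i, (w2 i : ℝ) * x i = (D - 1) * s := by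
        rw [hs, Finset.mul_sum]
        refine Finset.sum_congr rfl fun i _ => ?_
        simp only [hw2]; push_cast; ring
      rw [hv_eq, hw2_eq]
      have hβD : D * β = α := by rw [hβ]; field_simp
      rcases le_total s β with hsle | hsge
      · rw [max_eq_right hsle,
            max_eq_right (mul_le_mul_of_nonneg_left hsle (by linarith)),
            max_eq_right (by nlinarith)]
        nlinarith
      · rw [max_eq_left hsge,
            max_eq_left (mul_le_mul_of_nonneg_left hsge (by linarith)),
            max_eq_left (by nlinarith)]
        ring
end

section
/- In R₂ := MvPolynomial (Fin 2) (Tropical (WithTop ℝ)), the principal ideal Ideal.span {X 0 + X 1} is not a prime ideal. -/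
open MvPolynomial

private noncomputable def trop_e0 : Fin 2 →₀ ℕ := Finsupp.single 0 1
private noncomputable def trop_e1 : Fin 2 →₀ ℕ := Finsupp.single 1 1

private lemma trop_addself (a : MvPolynomial (Fin 2) (Tropical (WithTop ℝ))) :
    a + a = a := by ext m; simp [Tropical.add_self]

private lemma trop_two : (2 : MvPolynomial (Fin 2) (Tropical (WithTop ℝ))) = 1 := by
  have h := trop_addself 1
  rwa [one_add_one_eq_two] at h

private lemma trop_three : (3 : MvPolynomial (Fin 2) (Tropical (WithTop ℝ))) = 1 := by
  have h := trop_addself 1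
  rw [one_add_one_eq_two] at h
  calc (3 : MvPolynomial (Fin 2) (Tropical (WithTop ℝ))) = 2 + 1 := by
        rw [two_add_one_eq_three]
    _ = 1 + 1 := by rw [trop_two]
    _ = 1 := trop_addself 1

private lemma trop_key_s15 :
    ((X 0 + 1) * (X 1 + 1)) * (X 0 + X 1)
      = ((X 0 + X 1 + 1) * (X 0 * X 1 + X 0 + X 1) :
          MvPolynomial (Fin 2) (Tropical (WithTop ℝ))) := by
  ring_nf
  rw [trop_two, trop_three]

/-- In the tropical polynomial semiring in two variables, the principal ideal generated
by `X 0 + X 1` is not prime. -/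
theorem stmt15 :
    ¬ (Ideal.span {(MvPolynomial.X 0 + MvPolynomial.X 1 :
        MvPolynomial (Fin 2) (Tropical (WithTop ℝ)))}).IsPrime := by
  intro hp
  have hmem : ((X 0 + X 1 + 1) * (X 0 * X 1 + X 0 + X 1) :
      MvPolynomial (Fin 2) (Tropical (WithTop ℝ))) ∈
      Ideal.span {(X 0 + X 1 : MvPolynomial (Fin 2) (Tropical (WithTop ℝ)))} := by
    rw [Ideal.mem_span_singleton']
    exact ⟨(X 0 + 1) * (X 1 + 1), trop_key_s15⟩
  rcases hp.mem_or_mem hmem with hf | hg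
  · obtain ⟨c, hc⟩ := Ideal.mem_span_singleton'.mp hf
    have h0 := congrArg constantCoeff hc
    simp at h0
  · obtain ⟨h, hc⟩ := Ideal.mem_span_singleton'.mp hg
    have h0 : coeff trop_e0 h = 0 := by
      have := congrArg (coeff (trop_e0 + trop_e0)) hc
      rwa [show coeff (trop_e0 + trop_e0) (h * (X 0 + X 1)) = coeff trop_e0 h by
            simp [mul_add, trop_e0, coeff_mul_X', coeff_mul_X, ← Finsupp.single_add,
              ← Finsupp.single_tsub, Finsupp.single_eq_single_iff],
          show coeff (trop_e0 + trop_e0) ((X 0 * X 1 + X 0 + X 1) :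
              MvPolynomial (Fin 2) (Tropical (WithTop ℝ))) = 0 by
            simp [trop_e0, coeff_X_mul', coeff_X', ← Finsupp.single_add,
              ← Finsupp.single_tsub, Finsupp.single_eq_single_iff]] at this
    have h1 : coeff trop_e1 h = 0 := by
      have := congrArg (coeff (trop_e1 + trop_e1)) hc
      rwa [show coeff (trop_e1 + trop_e1) (h * (X 0 + X 1)) = coeff trop_e1 h by
            simp [mul_add, trop_e1, coeff_mul_X', coeff_mul_X, ← Finsupp.single_add,
              ← Finsupp.single_tsub, Finsupp.single_eq_single_iff],
          show coeff (trop_e1 + trop_e1) ((X 0 * X 1 + X 0 + X 1) :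
              MvPolynomial (Fin 2) (Tropical (WithTop ℝ))) = 0 by
            simp [trop_e1, coeff_X_mul', coeff_X', ← Finsupp.single_add,
              ← Finsupp.single_tsub, Finsupp.single_eq_single_iff]] at this
    have hfin := congrArg (coeff (trop_e0 + trop_e1)) hc
    rw [show coeff (trop_e0 + trop_e1) (h * (X 0 + X 1))
          = coeff trop_e1 h + coeff trop_e0 h by
          simp only [trop_e0, trop_e1, mul_add, coeff_add]
          rw [coeff_mul_X, add_comm (Finsupp.single 0 1), coeff_mul_X],
        show coeff (trop_e0 + trop_e1) ((X 0 * X 1 + X 0 + X 1) :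
            MvPolynomial (Fin 2) (Tropical (WithTop ℝ))) = 1 by
          simp [trop_e0, trop_e1, coeff_X_mul', coeff_X', ← Finsupp.single_add,
            Finsupp.single_eq_single_iff],
        h0, h1, add_zero] at hfin
    simp at hfin
end
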